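/- arXiv:0911.1146 — 6 statements merged into one kernel-verified Lean document; each statement's English description precedes it below -/
import Mathlib

section
/- Let T be a rooted tree with leaf set 𝒳, 𝒢 a finite set of genes, G : 𝒳 → Set 𝒢, and k a positive integer. Define F*(v) = { g ∈ 𝒢 : v lies on the path between some pair of leaves x₁, x₂ with g ∈ G(x₁), g ∈ G(x₂) }. Then T admits a (G,k)-gene labelling (a map F : V → Set 𝒢 with F(x) = G(x) on leaves, |F(v)| ≤ k for all v, and {v : g ∈ F(v)} connected in T for each g) if and only if |F*(v)| ≤ k for every vertex v. -/
/-!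
The labelling `F*` is the largest candidate: if `F` is any `(G,k)`-gene labelling, then for each
gene `g` the set `{v | g ∈ F v}` is connected and contains every leaf carrying `g`, so in a tree it
contains the unique path between any two such leaves; hence `F* v ⊆ F v`. Conversely `F*` is
itself a labelling as soon as `|F* v| ≤ k`: a leaf lies on a path only as an endpoint, so
`F* = G` on leaves, and the union of all paths between the leaves carrying `g` is connected.
-/

namespace SimpleGraph

variable {V : Type*} {G : SimpleGraph V} {Y S : Set V}

def pathSpan (G : SimpleGraph V) (Y : Set V) : Set V :=
  {v | ∃ x₁ ∈ Y, ∃ x₂ ∈ Y, ∃ p : G.Walk x₁ x₂, p.IsPath ∧ v ∈ p.support}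

lemma mem_pathSpan_of_mem_support {x₁ x₂ v : V} (hx₁ : x₁ ∈ Y) (hx₂ : x₂ ∈ Y)
    {p : G.Walk x₁ x₂} (hp : p.IsPath) (hv : v ∈ p.support) : v ∈ G.pathSpan Y :=
  ⟨x₁, hx₁, x₂, hx₂, p, hp, hv⟩

lemma subset_pathSpan : Y ⊆ G.pathSpan Y :=
  fun _ hx => mem_pathSpan_of_mem_support hx hx Walk.IsPath.nil (Walk.start_mem_support _)

lemma mem_of_mem_pathSpan_of_subsingleton_neighborSet {x : V} (hx : x ∈ G.pathSpan Y)
    (hleaf : (G.neighborSet x).Subsingleton) : x ∈ Y := by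
  obtain ⟨x₁, hx₁, x₂, hx₂, p, hp, hxp⟩ := hx
  by_contra hxY
  exact hp.isTrail.not_mem_support_of_subsingleton_neighborSet (by rintro rfl; exact hxY hx₁)
    (by rintro rfl; exact hxY hx₂) hleaf hxp

lemma Preconnected.induce_pathSpan (hG : G.Preconnected) (Y : Set V) :
    (G.induce (G.pathSpan Y)).Preconnected := by
  classical
  have reach_of_mem_support {x₁ x₂ u : V} (hx₁ : x₁ ∈ Y) (hx₂ : x₂ ∈ Y) (p : G.Walk x₁ x₂)
      (hp : p.IsPath) (hu : u ∈ p.support) :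
      (G.induce (G.pathSpan Y)).Reachable ⟨x₁, subset_pathSpan hx₁⟩
        ⟨u, mem_pathSpan_of_mem_support hx₁ hx₂ hp hu⟩ :=
    ⟨(p.takeUntil u hu).induce _ fun _ hv =>
      mem_pathSpan_of_mem_support hx₁ hx₂ hp (p.support_takeUntil_subset_support hu hv)⟩
  rintro ⟨u, x₁, hx₁, x₂, hx₂, p, hp, hu⟩ ⟨w, y₁, hy₁, y₂, hy₂, q, hq, hw⟩
  obtain ⟨r, hr⟩ := hG.exists_isPath x₁ y₁
  exact ((reach_of_mem_support hx₁ hx₂ p hp hu).symm.trans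
    (reach_of_mem_support hx₁ hy₁ r hr r.end_mem_support)).trans
    (reach_of_mem_support hy₁ hy₂ q hq hw)

lemma IsAcyclic.pathSpan_subset (hG : G.IsAcyclic) (hS : (G.induce S).Preconnected)
    (hYS : Y ⊆ S) : G.pathSpan Y ⊆ S := by
  classical
  rintro v ⟨x₁, hx₁, x₂, hx₂, p, hp, hvp⟩
  have hx₁S : x₁ ∈ S := hYS hx₁
  have hx₂S : x₂ ∈ S := hYS hx₂
  obtain ⟨w⟩ := hS ⟨x₁, hx₁S⟩ ⟨x₂, hx₂S⟩
  have hpq : p = w.toPath.1.map (Embedding.induce S).toHom :=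
    congrArg Subtype.val <| (hG.subsingleton_path x₁ x₂).elim ⟨p, hp⟩
      ⟨_, w.toPath.2.map (f := (Embedding.induce S).toHom) Subtype.val_injective⟩
  have mem_of_mem_support_map {a b : S} (q : (G.induce S).Walk a b) :
      ∀ u ∈ (q.map (Embedding.induce S).toHom).support, u ∈ S := by
    rw [Walk.support_map, List.forall_mem_map]
    exact fun u _ => u.2
  exact mem_of_mem_support_map _ v (hpq ▸ hvp)

end SimpleGraph

open SimpleGraph in
theorem stmt4_general {V 𝒢 : Type*} [Fintype 𝒢] (T : SimpleGraph V) (hT : T.IsTree)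
    (X : Set V) (hX : ∀ x ∈ X, (T.neighborSet x).Subsingleton)
    (Gm : V → Set 𝒢) (k : ℕ) :
    (∃ F : V → Set 𝒢,
        (∀ x ∈ X, F x = Gm x) ∧
        (∀ v : V, (F v).ncard ≤ k) ∧
        (∀ g : 𝒢, (T.induce {v | g ∈ F v}).Preconnected)) ↔
    (∀ v : V,
      ({g : 𝒢 | ∃ x₁ ∈ X, ∃ x₂ ∈ X, g ∈ Gm x₁ ∧ g ∈ Gm x₂ ∧
        ∃ p : T.Walk x₁ x₂, p.IsPath ∧ v ∈ p.support}).ncard ≤ k) := by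
  have hFstar (v : V) : {g : 𝒢 | ∃ x₁ ∈ X, ∃ x₂ ∈ X, g ∈ Gm x₁ ∧ g ∈ Gm x₂ ∧
      ∃ p : T.Walk x₁ x₂, p.IsPath ∧ v ∈ p.support} =
      {g | v ∈ T.pathSpan {x | x ∈ X ∧ g ∈ Gm x}} := by
    ext g
    constructor
    · rintro ⟨x₁, hx₁, x₂, hx₂, hg₁, hg₂, hp⟩
      exact ⟨x₁, ⟨hx₁, hg₁⟩, x₂, ⟨hx₂, hg₂⟩, hp⟩
    · rintro ⟨x₁, ⟨hx₁, hg₁⟩, x₂, ⟨hx₂, hg₂⟩, hp⟩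
      exact ⟨x₁, hx₁, x₂, hx₂, hg₁, hg₂, hp⟩
  simp only [hFstar]
  constructor
  · rintro ⟨F, hFX, hFk, hFconn⟩ v
    refine (Set.ncard_le_ncard (fun g hg => ?_) (Set.toFinite _)).trans (hFk v)
    have carriers_subset : {x | x ∈ X ∧ g ∈ Gm x} ⊆ {v | g ∈ F v} :=
      fun x ⟨hxX, hg⟩ => show g ∈ F x from hFX x hxX ▸ hg
    exact hT.isAcyclic.pathSpan_subset (hFconn g) carriers_subset hg
  · refine fun hle => ⟨fun v => {g | v ∈ T.pathSpan {x | x ∈ X ∧ g ∈ Gm x}}, ?_, hle,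
      fun g => hT.connected.preconnected.induce_pathSpan _⟩
    intro x hx
    ext g
    exact ⟨fun hg => (mem_of_mem_pathSpan_of_subsingleton_neighborSet hg (hX x hx)).2,
      fun hg => subset_pathSpan ⟨hx, hg⟩⟩

/-- A tree `T` with leaf set `X` admits a `(G,k)`-gene labelling if and only if
`|F*(v)| ≤ k` for every vertex `v`, where
`F*(v) = {g | v lies on the path between two leaves both carrying g}`. -/
theorem stmt4 {V 𝒢 : Type*} [Fintype 𝒢] (T : SimpleGraph V) (hT : T.IsTree)
    (X : Set V) (hX : ∀ x ∈ X, (T.neighborSet x).Subsingleton)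
    (Gm : V → Set 𝒢) (k : ℕ) (hk : 0 < k) :
    (∃ F : V → Set 𝒢,
        (∀ x ∈ X, F x = Gm x) ∧
        (∀ v : V, (F v).ncard ≤ k) ∧
        (∀ g : 𝒢, (T.induce {v | g ∈ F v}).Preconnected)) ↔
    (∀ v : V,
      ({g : 𝒢 | ∃ x₁ ∈ X, ∃ x₂ ∈ X, g ∈ Gm x₁ ∧ g ∈ Gm x₂ ∧
        ∃ p : T.Walk x₁ x₂, p.IsPath ∧ v ∈ p.support}).ncard ≤ k) :=
  stmt4_general T hT X hX Gm k
end

section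
/- Let H = (V_H, E_H) be a finite undirected graph and k' a natural number. Suppose (T, {X_i}) is a tree decomposition of H of width at most k'. Define 𝒳 = E_H, 𝒢 = V_H, k = k'+1, and G(e) = {u, v} for each edge e = {u,v} ∈ E_H. Then there exists a tree N whose leaves are in bijection with 𝒳 and a map F from the vertices of N to subsets of 𝒢 such that: F(leaf corresponding to e) = G(e), |F(w)| ≤ k for all vertices w, and for each vertex g ∈ V_H the set {w : g ∈ F(w)} induces a connected subtree of N. -/
/-- A rooted tree, given as a digraph: there is a root from which every vertex is
reachable, every vertex has at most one parent, and there are no directed cycles. -/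
def IsRootedTree {V : Type*} (A : V → V → Prop) : Prop :=
  (∃ ρ : V, ∀ v : V, Relation.ReflTransGen A ρ v) ∧
  (∀ a b c : V, A a c → A b c → a = b) ∧
  (∀ a : V, ¬ Relation.TransGen A a a)

/-- A sink (leaf) of a digraph: a vertex with no outgoing arcs. -/
def IsSink {V : Type*} (A : V → V → Prop) (v : V) : Prop := ∀ w : V, ¬ A v w

/-- The subdigraph induced by `S` is rooted (hence connected): if `S` is nonempty, it has
a vertex from which every vertex of `S` is reachable by a directed path inside `S`. -/
def RootedOn {V : Type*} (A : V → V → Prop) (S : Set V) : Prop :=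
  S.Nonempty → ∃ r ∈ S, ∀ x ∈ S,
    Relation.ReflTransGen (fun a b => A a b ∧ a ∈ S ∧ b ∈ S) r x


/-!
Root the tree `T` at a vertex `ρ`, the parent of a vertex being its neighbour closer to `ρ`.
Keep only the ancestors of the bags chosen to cover the edges of `H` (a finite subtree
containing `ρ`) and hang below the bag of each edge a new leaf for that edge. Bags are labelled
by themselves and leaves by the endpoints of their edge. Every kept bag has a child, so the sinks
are exactly the new leaves. For a vertex `g`, the bags containing `g` form a subtree of `T`; on
a path of a rooted tree the depth never decreases after an increase, so every bag containing
`g` except a shallowest one has its parent in that subtree, hence the labels containing `g` span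
a subtree rooted there.
-/

section Rank

variable {V : Type*} {A : V → V → Prop}

theorem not_transGen_self_of_rank (f : V → ℕ) (hf : ∀ a b, A a b → f a < f b) (a : V) :
    ¬ Relation.TransGen A a a := by
  intro h
  have hlt := Relation.TransGen.lift (p := (· < ·)) f hf a a h
  rw [Function.onFun, Relation.transGen_eq_self] at hlt
  exact lt_irrefl _ hlt

theorem reflTransGen_restrict_of_exists_pred (f : V → ℕ) (hf : ∀ a b, A a b → f a < f b)
    {S : Set V} {r : V} (hpred : ∀ x ∈ S, x ≠ r → ∃ y ∈ S, A y x) :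
    ∀ x ∈ S, Relation.ReflTransGen (fun a b => A a b ∧ a ∈ S ∧ b ∈ S) r x := by
  intro x
  induction x using (measure f).wf.induction with
  | _ x ih =>
    intro hx
    by_cases hxr : x = r
    · exact hxr ▸ .refl
    obtain ⟨y, hy, hyx⟩ := hpred x hx hxr
    exact .tail (ih y (hf y x hyx) hy) ⟨hyx, hy, hx⟩

theorem rootedOn_of_exists_pred (f : V → ℕ) (hf : ∀ a b, A a b → f a < f b)
    {S : Set V} {r : V} (hr : r ∈ S) (hpred : ∀ x ∈ S, x ≠ r → ∃ y ∈ S, A y x) :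
    RootedOn A S :=
  fun _ => ⟨r, hr, reflTransGen_restrict_of_exists_pred f hf hpred⟩

theorem reflTransGen_of_exists_pred (f : V → ℕ) (hf : ∀ a b, A a b → f a < f b) (ρ : V)
    (hpred : ∀ v, v ≠ ρ → ∃ u, A u v) (v : V) : Relation.ReflTransGen A ρ v := by
  have hpred' : ∀ x ∈ Set.univ, x ≠ ρ → ∃ y ∈ Set.univ, A y x := fun x _ hx =>
    (hpred x hx).imp fun y hy => ⟨trivial, hy⟩
  exact Relation.ReflTransGen.mono (fun _ _ h => h.1) _ _
    (reflTransGen_restrict_of_exists_pred f hf hpred' v trivial)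

theorem isRootedTree_of_rank (f : V → ℕ) (hf : ∀ a b, A a b → f a < f b) (ρ : V)
    (hpred : ∀ v, v ≠ ρ → ∃ u, A u v) (huniq : ∀ a b c, A a c → A b c → a = b) :
    IsRootedTree A :=
  ⟨⟨ρ, reflTransGen_of_exists_pred f hf ρ hpred⟩, huniq, not_transGen_self_of_rank f hf⟩

theorem finite_setOf_reflTransGen_of_rank (f : V → ℕ) (hf : ∀ a b, A a b → f a < f b)
    (huniq : ∀ a b c, A a c → A b c → a = b) (x : V) :
    {y | Relation.ReflTransGen A y x}.Finite := by
  induction x using (measure f).wf.induction with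
  | _ x ih =>
    have hparents : {z | A z x}.Finite :=
      Set.Subsingleton.finite fun a ha b hb => huniq a b x ha hb
    refine ((hparents.biUnion fun z hz => ih z (hf z x hz)).insert x).subset fun y hy => ?_
    rcases Relation.ReflTransGen.cases_tail hy with rfl | ⟨z, hyz, hzx⟩
    · exact Set.mem_insert _ _
    · exact Set.mem_insert_of_mem _ (Set.mem_biUnion hzx hyz)

end Rank

namespace SimpleGraph

variable {I : Type*} {T : SimpleGraph I}

def IsParent (T : SimpleGraph I) (ρ a b : I) : Prop :=
  T.Adj a b ∧ T.dist ρ b = T.dist ρ a + 1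

theorem IsParent.dist_lt {ρ a b : I} (h : T.IsParent ρ a b) : T.dist ρ a < T.dist ρ b :=
  h.2 ▸ Nat.lt_succ_self _

namespace IsTree

variable (hT : T.IsTree) {ρ : I}
include hT

theorem exists_isParent {x : I} (hx : x ≠ ρ) : ∃ y, T.IsParent ρ y x := by
  obtain ⟨p, hp⟩ := hT.connected.exists_walk_length_eq_dist x ρ
  obtain ⟨y, hxy, q, rfl⟩ := Walk.exists_eq_cons_of_ne hx p
  have hy : T.dist ρ y ≤ q.length := dist_comm (G := T) ▸ dist_le q
  rw [Walk.length_cons, dist_comm] at hp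
  refine ⟨y, hxy.symm, ?_⟩
  rcases hT.dist_eq_dist_add_one_of_adj ρ hxy with h | h <;> omega

theorem exists_isPath_penultimate_eq {a c : I} (hac : T.IsParent ρ a c) :
    ∃ p : T.Walk ρ c, p.IsPath ∧ p.penultimate = a := by
  obtain ⟨p, hp⟩ := hT.connected.exists_walk_length_eq_dist ρ a
  refine ⟨p.concat hac.1, (p.concat hac.1).isPath_of_length_eq_dist ?_, p.penultimate_concat _⟩
  rw [Walk.length_concat, hp, hac.2]

theorem isParent_unique {a b c : I} (ha : T.IsParent ρ a c) (hb : T.IsParent ρ b c) :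
    a = b := by
  obtain ⟨p, hp, rfl⟩ := hT.exists_isPath_penultimate_eq ha
  obtain ⟨q, hq, rfl⟩ := hT.exists_isPath_penultimate_eq hb
  rw [(hT.existsUnique_path ρ c).unique hp hq]

theorem dist_lt_of_isPath_cons {u v w : I} (huv : T.IsParent ρ u v) (p : T.Walk v w)
    (hp : (Walk.cons huv.1 p).IsPath) : T.dist ρ u < T.dist ρ w := by
  induction p generalizing u with
  | nil => exact huv.dist_lt
  | @cons v v' w hvv' p ih =>
    rw [Walk.cons_isPath_iff] at hp
    rcases hT.dist_eq_dist_add_one_of_adj ρ hvv' with h | h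
    · -- a descent right after an ascent would give `v` two parents
      have hu : u = v' := hT.isParent_unique huv ⟨hvv'.symm, h⟩
      exact absurd (by simp [hu, p.start_mem_support]) hp.2
    · exact huv.dist_lt.trans (ih ⟨hvv', h⟩ hp.1)

theorem exists_isParent_mem_of_preconnected {C : Set I} (hC : (T.induce C).Preconnected)
    {x r : I} (hx : x ∈ C) (hr : r ∈ C) (hxr : x ≠ r) (hd : T.dist ρ r ≤ T.dist ρ x) :
    ∃ y ∈ C, T.IsParent ρ y x := by
  classical
  obtain ⟨w⟩ := hC ⟨x, hx⟩ ⟨r, hr⟩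
  let p : T.Walk x r := (w.map (Embedding.induce C).toHom).bypass
  have hpC : ∀ z ∈ p.support, z ∈ C := fun z hz => by
    obtain ⟨z', -, rfl⟩ := List.mem_map.1 <|
      Walk.support_map _ w ▸ Walk.support_bypass_subset_support _ hz
    exact z'.2
  obtain ⟨v, hxv, q, hpq⟩ := Walk.exists_eq_cons_of_ne hxr p
  have hv : v ∈ C := hpC v (by simp [hpq])
  rcases hT.dist_eq_dist_add_one_of_adj ρ hxv with h | h
  · exact ⟨v, hv, hxv.symm, h⟩
  · have := hT.dist_lt_of_isPath_cons ⟨hxv, h⟩ q (hpq ▸ Walk.bypass_isPath _)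
    omega

end IsTree

end SimpleGraph

/-- The paper's `(G, k)`-trees: `leaf` identifies `X` with the sinks of `N`, and `F` is the
labelling. -/
structure IsGeneTree {W X V : Type*} (N : W → W → Prop) (F : W → Set V) (leaf : X → W)
    (G : X → Set V) (k : ℕ) : Prop where
  isRootedTree : IsRootedTree N
  leaf_injective : Function.Injective leaf
  isSink_leaf : ∀ x, IsSink N (leaf x)
  exists_leaf_of_isSink : ∀ w, IsSink N w → ∃ x, leaf x = w
  label_leaf : ∀ x, F (leaf x) = G x
  ncard_label_le : ∀ w, (F w).ncard ≤ k
  rootedOn_label : ∀ g, RootedOn N {w | g ∈ F w}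

theorem Relation.ReflTransGen.of_equiv {α β : Type*} {R : α → α → Prop} (e : β ≃ α) {a b : β}
    (h : Relation.ReflTransGen R (e a) (e b)) :
    Relation.ReflTransGen (fun a b => R (e a) (e b)) a b := by
  simpa [Function.onFun] using Relation.ReflTransGen.lift e.symm
    (p := fun a b => R (e a) (e b)) (fun x y h => by simpa [Function.onFun] using h) _ _ h

namespace IsGeneTree

variable {W W' X V : Type*} {N : W → W → Prop} {F : W → Set V} {leaf : X → W}
  {G : X → Set V} {k : ℕ}

theorem comap_equiv (h : IsGeneTree N F leaf G k) (e : W' ≃ W) :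
    IsGeneTree (fun a b => N (e a) (e b)) (F ∘ e) (e.symm ∘ leaf) G k where
  isRootedTree := by
    obtain ⟨⟨ρ, hρ⟩, huniq, hacyc⟩ := h.isRootedTree
    refine ⟨⟨e.symm ρ, fun v => .of_equiv e (by simpa using hρ (e v))⟩,
      fun a b c ha hb => e.injective (huniq _ _ _ ha hb), fun a ha => hacyc (e a) ?_⟩
    exact Relation.TransGen.lift e (fun _ _ h => h) _ _ ha
  leaf_injective := e.symm.injective.comp h.leaf_injective
  isSink_leaf x w hw := h.isSink_leaf x (e w) (by simpa using hw)
  exists_leaf_of_isSink w hw := by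
    obtain ⟨x, hx⟩ := h.exists_leaf_of_isSink (e w) fun w' hw' => hw (e.symm w') (by simpa)
    exact ⟨x, by simp [hx]⟩
  label_leaf x := by simp [h.label_leaf]
  ncard_label_le w := h.ncard_label_le (e w)
  rootedOn_label g := by
    rintro ⟨w, hw⟩
    obtain ⟨r, hr, hreach⟩ := h.rootedOn_label g ⟨e w, hw⟩
    refine ⟨e.symm r, by simpa using hr, fun x hx => ?_⟩
    refine .of_equiv (R := fun a b => N a b ∧ g ∈ F a ∧ g ∈ F b) e ?_
    simpa using hreach (e x) hx

end IsGeneTree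

/-- Without leaves no finite tree qualifies, since a finite rooted tree has a sink. -/
theorem isGeneTree_succ_of_isEmpty {X V : Type*} [IsEmpty X] (G : X → Set V) (k : ℕ) :
    IsGeneTree (fun n m : ℕ => m = n + 1) (fun _ => (∅ : Set V)) isEmptyElim G k where
  isRootedTree := isRootedTree_of_rank id (fun _ _ h => by simp [h]) 0
    (fun v hv => ⟨v - 1, by omega⟩) (fun _ _ _ ha hb => by omega)
  leaf_injective x := isEmptyElim x
  isSink_leaf x := isEmptyElim x
  exists_leaf_of_isSink w hw := absurd rfl (hw (w + 1))
  label_leaf x := isEmptyElim x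
  ncard_label_le _ := by simp
  rootedOn_label _ := by simp [RootedOn]

namespace SimpleGraph

variable {I X V : Type*} {T : SimpleGraph I} {ρ : I} {i : X → I}

def ancestors (T : SimpleGraph I) (ρ : I) (i : X → I) : Set I :=
  ⋃ x, {y | Relation.ReflTransGen (T.IsParent ρ) y (i x)}

theorem self_mem_ancestors (x : X) : i x ∈ T.ancestors ρ i :=
  Set.mem_iUnion.2 ⟨x, .refl⟩

theorem mem_ancestors_of_isParent {y z : I} (hy : y ∈ T.ancestors ρ i)
    (hzy : T.IsParent ρ z y) : z ∈ T.ancestors ρ i := by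
  obtain ⟨x, hyx⟩ := Set.mem_iUnion.1 hy
  exact Set.mem_iUnion.2 ⟨x, .head hzy hyx⟩

/-- The subtree of `T` spanned by `ρ` and the points `i x`, oriented away from `ρ`, with a new
leaf `x` hung below each `i x`. -/
def pendantTree (T : SimpleGraph I) (ρ : I) (i : X → I) :
    T.ancestors ρ i ⊕ X → T.ancestors ρ i ⊕ X → Prop
  | .inl a, .inl b => T.IsParent ρ a b
  | .inl a, .inr x => (a : I) = i x
  | .inr _, _ => False

noncomputable def pendantDepth (T : SimpleGraph I) (ρ : I) (i : X → I) : T.ancestors ρ i ⊕ X → ℕ :=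
  Sum.elim (fun a => T.dist ρ a) (fun x => T.dist ρ (i x) + 1)

theorem pendantDepth_lt :
    ∀ a b, T.pendantTree ρ i a b → T.pendantDepth ρ i a < T.pendantDepth ρ i b
  | .inl _, .inl _, h => by simp [pendantDepth, h.2]
  | .inl _, .inr _, h => by simp [pendantDepth, show _ = _ from h]

theorem isSink_pendantTree_iff {w : T.ancestors ρ i ⊕ X} :
    IsSink (T.pendantTree ρ i) w ↔ ∃ x, Sum.inr x = w := by
  refine ⟨fun hw => ?_, fun ⟨x, hx⟩ w' => hx ▸ id⟩
  rcases w with ⟨a, ha⟩ | x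
  · obtain ⟨x, hax⟩ := Set.mem_iUnion.1 ha
    rcases hax.cases_head with rfl | ⟨c, hac, hcx⟩
    · exact (hw (.inr x) rfl).elim
    · exact (hw (.inl ⟨c, Set.mem_iUnion.2 ⟨x, hcx⟩⟩) hac).elim
  · exact ⟨x, rfl⟩

namespace IsTree

variable (hT : T.IsTree)
include hT

theorem pendantTree_unique :
    ∀ a b c, T.pendantTree ρ i a c → T.pendantTree ρ i b c → a = b
  | .inl _, .inl _, .inl _, ha, hb => congrArg Sum.inl (Subtype.ext (hT.isParent_unique ha hb))
  | .inl _, .inl _, .inr _, ha, hb => congrArg Sum.inl (Subtype.ext (ha.trans hb.symm))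
  | .inr _, _, _, ha, _ => ha.elim
  | _, .inr _, _, _, hb => hb.elim

theorem ancestors_finite [Finite X] : (T.ancestors ρ i).Finite :=
  Set.finite_iUnion fun x => finite_setOf_reflTransGen_of_rank (T.dist ρ)
    (fun _ _ => IsParent.dist_lt) (fun _ _ _ => hT.isParent_unique) (i x)

theorem isRootedTree_pendantTree [Nonempty X] : IsRootedTree (T.pendantTree ρ i) := by
  obtain ⟨x₀⟩ := ‹Nonempty X›
  have hρ : ρ ∈ T.ancestors ρ i := Set.mem_iUnion.2 ⟨x₀,
    reflTransGen_of_exists_pred (T.dist ρ) (fun _ _ => IsParent.dist_lt) ρ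
      (fun _ hv => hT.exists_isParent hv) (i x₀)⟩
  refine isRootedTree_of_rank (T.pendantDepth ρ i) pendantDepth_lt (.inl ⟨ρ, hρ⟩) ?_
    hT.pendantTree_unique
  rintro (a | x) ha
  · obtain ⟨y, hy⟩ := hT.exists_isParent fun h => ha (congrArg _ (Subtype.ext h))
    exact ⟨.inl ⟨y, mem_ancestors_of_isParent a.2 hy⟩, hy⟩
  · exact ⟨.inl ⟨i x, self_mem_ancestors x⟩, rfl⟩

theorem rootedOn_pendantTree {Xb : I → Set V} {G : X → Set V} {g : V}
    (hconn : (T.induce {j | g ∈ Xb j}).Preconnected) (hG : ∀ x, G x ⊆ Xb (i x)) :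
    RootedOn (T.pendantTree ρ i) {w | g ∈ Sum.elim (fun a : T.ancestors ρ i => Xb a) G w} := by
  rintro ⟨w, hw⟩
  have hne : {a | a ∈ T.ancestors ρ i ∧ g ∈ Xb a}.Nonempty := by
    rcases w with a | x
    · exact ⟨a, a.2, hw⟩
    · exact ⟨i x, self_mem_ancestors x, hG x hw⟩
  obtain ⟨r, ⟨hr, hgr⟩, hmin⟩ := (measure (T.dist ρ)).wf.has_min _ hne
  refine rootedOn_of_exists_pred (T.pendantDepth ρ i) pendantDepth_lt (r := .inl ⟨r, hr⟩) hgr ?_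
    ⟨_, hw⟩
  rintro (a | x) hg har
  · obtain ⟨y, hgy, hya⟩ := hT.exists_isParent_mem_of_preconnected hconn hg hgr
      (fun h => har (congrArg _ (Subtype.ext h))) (not_lt.1 (hmin a ⟨a.2, hg⟩))
    exact ⟨.inl ⟨y, mem_ancestors_of_isParent a.2 hya⟩, hgy, hya⟩
  · exact ⟨.inl ⟨i x, self_mem_ancestors x⟩, hG x hg, rfl⟩

theorem isGeneTree_pendantTree [Nonempty X] {Xb : I → Set V} {G : X → Set V} {k : ℕ}
    (hconn : ∀ g, (T.induce {j | g ∈ Xb j}).Preconnected) (hG : ∀ x, G x ⊆ Xb (i x))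
    (hXb : ∀ j, (Xb j).ncard ≤ k) (hGk : ∀ x, (G x).ncard ≤ k) :
    IsGeneTree (T.pendantTree ρ i) (Sum.elim (fun a : T.ancestors ρ i => Xb a) G) Sum.inr G k where
  isRootedTree := hT.isRootedTree_pendantTree
  leaf_injective := Sum.inr_injective
  isSink_leaf x := isSink_pendantTree_iff.2 ⟨x, rfl⟩
  exists_leaf_of_isSink _ := isSink_pendantTree_iff.1
  label_leaf _ := rfl
  ncard_label_le := Sum.rec (fun a => hXb a) hGk
  rootedOn_label g := hT.rootedOn_pendantTree (hconn g) hG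

end IsTree

end SimpleGraph

theorem exists_isGeneTree_of_isTree {I X V : Type*} [Finite X] [Finite V] {T : SimpleGraph I}
    (hT : T.IsTree) (Xb : I → Set V) (hconn : ∀ g, (T.induce {j | g ∈ Xb j}).Preconnected)
    (k : ℕ) (hXb : ∀ j, (Xb j).ncard ≤ k) (G : X → Set V) (hG : ∀ x, ∃ j, G x ⊆ Xb j) :
    ∃ (W : Type) (N : W → W → Prop) (F : W → Set V) (leaf : X → W), IsGeneTree N F leaf G k := by
  cases isEmpty_or_nonempty X with
  | inl _ => exact ⟨ℕ, _, _, _, isGeneTree_succ_of_isEmpty G k⟩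
  | inr _ =>
    choose i hi using hG
    obtain ⟨ρ⟩ := hT.connected.nonempty
    have : Finite (T.ancestors ρ i) := hT.ancestors_finite.to_subtype
    have hGk : ∀ x, (G x).ncard ≤ k := fun x => (Set.ncard_le_ncard (hi x)).trans (hXb _)
    exact ⟨Shrink.{0} (T.ancestors ρ i ⊕ X), _, _, _,
      (hT.isGeneTree_pendantTree hconn hi hXb hGk).comap_equiv (equivShrink _).symm⟩

theorem stmt6_general {VH : Type*} [Fintype VH] (H : SimpleGraph VH) (k' : ℕ)
    {I : Type*} (T : SimpleGraph I) (Xb : I → Set VH)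
    (hT : T.IsTree)
    (hedge : ∀ u v : VH, H.Adj u v → ∃ i, u ∈ Xb i ∧ v ∈ Xb i)
    (hconn : ∀ v : VH, (T.induce {i | v ∈ Xb i}).Preconnected)
    (hwidth : ∀ i, (Xb i).ncard ≤ k' + 1) :
    ∃ (W : Type) (N : W → W → Prop) (F : W → Set VH) (leaf : H.edgeSet → W),
      IsRootedTree N ∧
      Function.Injective leaf ∧
      (∀ e : H.edgeSet, IsSink N (leaf e)) ∧
      (∀ w : W, IsSink N w → ∃ e : H.edgeSet, leaf e = w) ∧
      (∀ e : H.edgeSet, F (leaf e) = {v : VH | v ∈ (e : Sym2 VH)}) ∧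
      (∀ w : W, (F w).ncard ≤ k' + 1) ∧
      (∀ g : VH, RootedOn N {w | g ∈ F w}) := by
  have hbag : ∀ e : H.edgeSet, ∃ j, {v : VH | v ∈ (e : Sym2 VH)} ⊆ Xb j := by
    rintro ⟨e, he⟩
    induction e using Sym2.ind with
    | _ u v =>
      obtain ⟨j, hu, hv⟩ := hedge u v he
      exact ⟨j, fun w hw => (Sym2.mem_iff.1 hw).elim (· ▸ hu) (· ▸ hv)⟩
  obtain ⟨W, N, F, leaf, h⟩ := exists_isGeneTree_of_isTree hT Xb hconn (k' + 1) hwidth _ hbag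
  exact ⟨W, N, F, leaf, h.isRootedTree, h.leaf_injective, h.isSink_leaf, h.exists_leaf_of_isSink,
    h.label_leaf, h.ncard_label_le, h.rootedOn_label⟩

/-- Given a tree decomposition of a graph `H` of width at most `k'`, taking
`𝒳 = E_H`, `𝒢 = V_H`, `k = k'+1` and `G(e) = ` the endpoints of `e`, there is a tree `N`
whose leaves are in bijection with `𝒳` admitting a `(G,k)`-gene labelling. -/
theorem stmt6 {VH : Type*} [Fintype VH] (H : SimpleGraph VH) (k' : ℕ)
    {I : Type*} (T : SimpleGraph I) (Xb : I → Set VH)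
    (hT : T.IsTree)
    (hcover : ∀ v : VH, ∃ i, v ∈ Xb i)
    (hedge : ∀ u v : VH, H.Adj u v → ∃ i, u ∈ Xb i ∧ v ∈ Xb i)
    (hconn : ∀ v : VH, (T.induce {i | v ∈ Xb i}).Preconnected)
    (hwidth : ∀ i, (Xb i).ncard ≤ k' + 1) :
    ∃ (W : Type) (N : W → W → Prop) (F : W → Set VH) (leaf : H.edgeSet → W),
      IsRootedTree N ∧
      Function.Injective leaf ∧
      (∀ e : H.edgeSet, IsSink N (leaf e)) ∧
      (∀ w : W, IsSink N w → ∃ e : H.edgeSet, leaf e = w) ∧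
      (∀ e : H.edgeSet, F (leaf e) = {v : VH | v ∈ (e : Sym2 VH)}) ∧
      (∀ w : W, (F w).ncard ≤ k' + 1) ∧
      (∀ g : VH, RootedOn N {w | g ∈ F w}) :=
  stmt6_general H k' T Xb hT hedge hconn hwidth
end

section
/- A finite undirected graph H has treewidth at most k − 1 if and only if (taking 𝒳 = E_H, 𝒢 = V_H, and G(e) = {u,v} for each edge e = {u,v}) there exists a tree N with leaf set 𝒳 admitting a (G,k)-gene labelling: a map F on vertices of N with F(e) = G(e) for leaves e, |F(w)| ≤ k for all w, and, for each g ∈ V_H, {w : g ∈ F(w)} connected in N. -/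
open SimpleGraph Walk Relation

theorem Relation.not_transGen_self_of_lt {V α : Type*} [Preorder α] {A : V → V → Prop}
    (f : V → α) (hf : ∀ a b, A a b → f a < f b) (a : V) : ¬ TransGen A a a := by
  intro h
  have hlt := TransGen.lift f hf a a h
  rw [transGen_eq_self] at hlt
  exact lt_irrefl _ hlt

inductive ReachIn {V : Type*} (A : V → V → Prop) (a : V) : ℕ → V → Prop
  | refl : ReachIn A a 0 a
  | tail {n : ℕ} {b c : V} : ReachIn A a n b → A b c → ReachIn A a (n + 1) c

section RootedTree

variable {V : Type*} {A : V → V → Prop} {ρ : V}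

theorem Relation.ReflTransGen.exists_reachIn {a b : V} (h : ReflTransGen A a b) :
    ∃ n, ReachIn A a n b := by
  induction h with
  | refl => exact ⟨0, .refl⟩
  | tail _ hbc ih =>
    obtain ⟨n, hn⟩ := ih
    exact ⟨n + 1, hn.tail hbc⟩

theorem IsRootedTree.not_rel_root (hA : IsRootedTree A) (hρ : ∀ v, ReflTransGen A ρ v) (a : V) :
    ¬ A a ρ := fun h => hA.2.2 ρ (TransGen.tail' (hρ a) h)

theorem IsRootedTree.reachIn_unique (hA : IsRootedTree A) (hρ : ∀ v, ReflTransGen A ρ v)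
    {m n : ℕ} {v : V} (hm : ReachIn A ρ m v) (hn : ReachIn A ρ n v) : m = n := by
  induction hm generalizing n with
  | refl =>
    cases hn with
    | refl => rfl
    | tail _ h => exact absurd h (hA.not_rel_root hρ _)
  | tail _ hbc ih =>
    cases hn with
    | refl => exact absurd hbc (hA.not_rel_root hρ _)
    | tail hn hb'c => rw [ih (hA.2.1 _ _ _ hb'c hbc ▸ hn)]

theorem IsRootedTree.exists_depth (hA : IsRootedTree A) :
    ∃ d : V → ℕ, ∀ a b, A a b → d b = d a + 1 := by
  obtain ⟨ρ, hρ⟩ := hA.1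
  choose d hd using fun v => (hρ v).exists_reachIn
  exact ⟨d, fun a b hab => hA.reachIn_unique hρ (hd b) ((hd a).tail hab)⟩

theorem SimpleGraph.reachable_fromRel_of_reflTransGen {a b : V} (h : ReflTransGen A a b) :
    (fromRel A).Reachable a b := by
  induction h with
  | refl => rfl
  | @tail b c _ hbc ih =>
    refine ih.trans ?_
    by_cases hne : b = c
    · rw [hne]
    · exact Adj.reachable ((fromRel_adj ..).2 ⟨hne, .inl hbc⟩)

theorem RootedOn.preconnected_induce_fromRel {S : Set V} (h : RootedOn A S) :
    ((fromRel A).induce S).Preconnected := by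
  rintro ⟨x, hx⟩ ⟨y, hy⟩
  obtain ⟨r, hr, hreach⟩ := h ⟨x, hx⟩
  suffices ∀ z (hz : z ∈ S), ((fromRel A).induce S).Reachable ⟨r, hr⟩ ⟨z, hz⟩ from
    (this x hx).symm.trans (this y hy)
  intro z hz
  induction hreach z hz with
  | refl => rfl
  | @tail b c _ hbc ih =>
    refine (ih hbc.2.1).trans ?_
    by_cases hne : b = c
    · subst hne; rfl
    · exact Adj.reachable ((fromRel_adj ..).2 ⟨hne, .inl hbc.1⟩)

/- A deepest vertex of a cycle would have both of its neighbours on the cycle as parents. -/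
theorem SimpleGraph.isAcyclic_fromRel_of_depth {d : V → ℕ} (hd : ∀ a b, A a b → d b = d a + 1)
    (huniq : ∀ a b c, A a c → A b c → a = b) : (fromRel A).IsAcyclic := by
  classical
  have parent : ∀ {x y}, (fromRel A).Adj y x → d y ≤ d x → A y x := by
    intro x y h hle
    refine ((fromRel_adj ..).1 h).2.resolve_right fun hxy => ?_
    have := hd _ _ hxy
    omega
  intro v c hc
  obtain ⟨x, hx, hmax⟩ := c.support.toFinset.exists_max_image d ⟨v, by simp⟩
  rw [List.mem_toFinset] at hx
  have hc' := hc.rotate hx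
  have hle : ∀ u ∈ (c.rotate x hx).support, d u ≤ d x := fun u hu =>
    hmax u (List.mem_toFinset.2 ((mem_support_rotate_iff ..).1 hu))
  have hnil : ¬ (c.rotate x hx).Nil := hc'.not_nil
  exact hc'.snd_ne_penultimate <| huniq _ _ _
    (parent (adj_snd hnil).symm (hle _ (getVert_mem_support ..)))
    (parent (adj_penultimate hnil) (hle _ (getVert_mem_support ..)))

theorem IsRootedTree.isTree_fromRel (hA : IsRootedTree A) : (fromRel A).IsTree := by
  obtain ⟨ρ, hρ⟩ := hA.1
  obtain ⟨d, hd⟩ := hA.exists_depth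
  exact ⟨(connected_iff_exists_forall_reachable _).2
    ⟨ρ, fun v => reachable_fromRel_of_reflTransGen (hρ v)⟩, isAcyclic_fromRel_of_depth hd hA.2.1⟩

end RootedTree

namespace SimpleGraph

variable {I : Type*} {T : SimpleGraph I}

theorem Walk.dist_le_of_mem_support {u v x : I} {p : T.Walk u v} (hp : p.length = T.dist u v)
    (hx : x ∈ p.support) : T.dist u x ≤ T.dist u v := by
  classical
  exact (dist_le (p.takeUntil x hx)).trans (hp ▸ p.length_takeUntil_le_length hx)

def orientFrom (T : SimpleGraph I) (ρ i j : I) : Prop :=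
  T.Adj i j ∧ T.dist ρ j = T.dist ρ i + 1

namespace IsTree

variable {ρ : I}

theorem exists_orientFrom_of_ne (hT : T.IsTree) {i : I} (h : i ≠ ρ) :
    ∃ j, T.orientFrom ρ j i := by
  obtain ⟨p, -, hp⟩ := hT.connected.exists_path_of_dist ρ i
  have hnil : ¬ p.Nil := fun hn => h hn.eq.symm
  refine ⟨p.penultimate, adj_penultimate hnil, ?_⟩
  have hdrop := dist_le p.dropLast
  rw [length_dropLast] at hdrop
  have hpos : p.length ≠ 0 := hnil ∘ length_eq_zero_iff.1
  rcases hT.dist_eq_dist_add_one_of_adj ρ (adj_penultimate hnil) with h' | h' <;> omega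

theorem eq_penultimate_of_orientFrom (hT : T.IsTree) {a c : I} {p : T.Walk ρ c} (hp : p.IsPath)
    (h : T.orientFrom ρ a c) : a = p.penultimate := by
  obtain ⟨q, hq, hql⟩ := hT.connected.exists_path_of_dist ρ a
  have hc : c ∉ q.support := fun hc => by
    have := Walk.dist_le_of_mem_support hql hc
    have := h.2
    omega
  exact hT.isAcyclic.eq_penultimate_of_adj_end hp h.1.symm
    (hT.isAcyclic.mem_support_of_ne_mem_support_of_adj_of_isPath hp hq h.1.symm hc)

theorem orientFrom_unique (hT : T.IsTree) {a b c : I} (ha : T.orientFrom ρ a c)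
    (hb : T.orientFrom ρ b c) : a = b := by
  obtain ⟨p, hp, -⟩ := hT.connected.exists_path_of_dist ρ c
  exact (hT.eq_penultimate_of_orientFrom hp ha).trans (hT.eq_penultimate_of_orientFrom hp hb).symm

theorem reflTransGen_orientFrom (hT : T.IsTree) (ρ i : I) : ReflTransGen (T.orientFrom ρ) ρ i := by
  induction h : T.dist ρ i using Nat.strong_induction_on generalizing i with
  | _ n ih =>
    by_cases hi : i = ρ
    · rw [hi]
    · obtain ⟨j, hj⟩ := hT.exists_orientFrom_of_ne hi
      exact (ih _ (by have := hj.2; omega) j rfl).tail hj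

theorem isRootedTree_orientFrom (hT : T.IsTree) (ρ : I) : IsRootedTree (T.orientFrom ρ) :=
  ⟨⟨ρ, hT.reflTransGen_orientFrom ρ⟩, fun _ _ _ => hT.orientFrom_unique,
    not_transGen_self_of_lt (T.dist ρ) fun _ _ h => h.2 ▸ Nat.lt_succ_self _⟩

theorem reflTransGen_orientFrom_of_isPath (hT : T.IsTree) {S : Set I} {x i : I}
    (p : T.Walk x i) (hp : p.IsPath) (hS : ∀ y ∈ p.support, y ∈ S)
    (hx : ∀ c, T.orientFrom ρ c x → c ∉ p.support) :
    ReflTransGen (fun a b => T.orientFrom ρ a b ∧ a ∈ S ∧ b ∈ S) x i := by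
  induction p with
  | nil => rfl
  | @cons x c i hxc q ih =>
    rw [cons_isPath_iff] at hp
    have hc : c ∈ (cons hxc q).support := by simp
    have hxc' : T.orientFrom ρ x c := by
      refine ⟨hxc, ?_⟩
      rcases hT.dist_eq_dist_add_one_of_adj ρ hxc with h | h
      · exact absurd hc (hx c ⟨hxc.symm, h⟩)
      · exact h
    refine .head ⟨hxc', hS x (by simp), hS c hc⟩ (ih hp.1 (fun y hy => hS y (by simp [hy])) ?_)
    intro c' hc' hc'q
    exact hp.2 (hT.orientFrom_unique hc' hxc' ▸ hc'q)

theorem rootedOn_orientFrom (hT : T.IsTree) (ρ : I) {S : Set I} (hS : (T.induce S).Preconnected) :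
    RootedOn (T.orientFrom ρ) S := by
  classical
  intro hne
  have hr := Function.argminOn_mem (T.dist ρ) S hne
  refine ⟨_, hr, fun i hi => ?_⟩
  obtain ⟨q⟩ := hS ⟨_, hr⟩ ⟨i, hi⟩
  have hp := q.bypass_isPath.map (f := (Embedding.induce S).toHom) Subtype.val_injective
  have hpS : ∀ y ∈ (q.bypass.map (Embedding.induce S).toHom).support, y ∈ S := by
    intro y hy
    obtain ⟨a, -, rfl⟩ := List.mem_map.1 ((Walk.support_map ..) ▸ hy)
    exact a.2
  refine hT.reflTransGen_orientFrom_of_isPath _ hp hpS fun c hc hcp => ?_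
  have := Function.argminOn_le (T.dist ρ) S (hpS c hcp)
  have := hc.2
  omega

end IsTree

end SimpleGraph

section Sprout

variable {I X V : Type*}

/- The infinite chain hung below every node makes the leaves `inr x` the only sinks. -/
inductive Sprout (P : I → I → Prop) (pick : X → I) : I × ℕ ⊕ X → I × ℕ ⊕ X → Prop
  | node {i j : I} : P i j → Sprout P pick (.inl (i, 0)) (.inl (j, 0))
  | chain (i : I) (s : ℕ) : Sprout P pick (.inl (i, s)) (.inl (i, s + 1))
  | leaf (x : X) : Sprout P pick (.inl (pick x, 0)) (.inr x)

def sproutLabel (Xb : I → Set V) (lab : X → Set V) : I × ℕ ⊕ X → Set V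
  | .inl (i, 0) => Xb i
  | .inl (_, _ + 1) => ∅
  | .inr x => lab x

variable {P : I → I → Prop} {pick : X → I}

theorem isSink_sprout_iff {w : I × ℕ ⊕ X} : IsSink (Sprout P pick) w ↔ ∃ x, .inr x = w := by
  constructor
  · rcases w with ⟨i, s⟩ | x
    · exact fun h => absurd (.chain i s) (h _)
    · exact fun _ => ⟨x, rfl⟩
  · rintro ⟨x, rfl⟩ w h
    cases h

theorem reflTransGen_sprout_inl {i j : I} (h : ReflTransGen P i j) (s : ℕ) :
    ReflTransGen (Sprout P pick) (.inl (i, 0)) (.inl (j, s)) := by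
  induction s with
  | zero =>
    exact ReflTransGen.lift (fun i : I => (.inl (i, 0) : I × ℕ ⊕ X)) (fun _ _ => .node) _ _ h
  | succ s ih => exact ih.tail (.chain j s)

theorem IsRootedTree.sprout (hP : IsRootedTree P) (pick : X → I) :
    IsRootedTree (Sprout P pick) := by
  obtain ⟨ρ, hρ⟩ := hP.1
  obtain ⟨d, hd⟩ := hP.exists_depth
  refine ⟨⟨.inl (ρ, 0), ?_⟩, ?_, ?_⟩
  · rintro (⟨i, s⟩ | x)
    · exact reflTransGen_sprout_inl (hρ i) s
    · exact (reflTransGen_sprout_inl (hρ (pick x)) 0).tail (.leaf x)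
  · intro a b c hac hbc
    cases hac with
    | node h => cases hbc with
      | node h' => rw [hP.2.1 _ _ _ h h']
    | chain => cases hbc; rfl
    | leaf => cases hbc; rfl
  · let φ : I × ℕ ⊕ X → ℕ ×ₗ ℕ :=
      Sum.elim (fun p => toLex (d p.1, p.2)) fun x => toLex (d (pick x) + 1, 0)
    refine not_transGen_self_of_lt φ fun a b h => ?_
    cases h with
    | node h => simp [φ, Prod.Lex.lt_iff, hd _ _ h]
    | chain | leaf => simp [φ, Prod.Lex.lt_iff]

theorem rootedOn_sprout {Xb : I → Set V} {lab : X → Set V} {g : V}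
    (hP : RootedOn P {i | g ∈ Xb i}) (hlab : ∀ x, g ∈ lab x → g ∈ Xb (pick x)) :
    RootedOn (Sprout P pick) {w | g ∈ sproutLabel Xb lab w} := by
  rintro ⟨w, hw⟩
  have hJ : {i | g ∈ Xb i}.Nonempty := by
    rcases w with ⟨i, _ | s⟩ | x
    · exact ⟨i, hw⟩
    · exact hw.elim
    · exact ⟨pick x, hlab x hw⟩
  obtain ⟨r, hr, hreach⟩ := hP hJ
  have lift : ∀ i, g ∈ Xb i → ReflTransGen
      (fun a b => Sprout P pick a b ∧ g ∈ sproutLabel Xb lab a ∧ g ∈ sproutLabel Xb lab b)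
      (.inl (r, 0)) (.inl (i, 0)) :=
    fun i hi => ReflTransGen.lift (fun i : I => (.inl (i, 0) : I × ℕ ⊕ X))
      (fun _ _ h => ⟨.node h.1, h.2.1, h.2.2⟩) _ _ (hreach i hi)
  refine ⟨.inl (r, 0), hr, ?_⟩
  rintro (⟨i, _ | s⟩ | x) hx
  · exact lift i hx
  · exact hx.elim
  · exact (lift _ (hlab x hx)).tail ⟨.leaf x, hlab x hx, hx⟩

theorem ncard_sproutLabel_le {Xb : I → Set V} {lab : X → Set V} {k : ℕ}
    (hXb : ∀ i, (Xb i).ncard ≤ k) (hlab : ∀ x, (lab x).ncard ≤ k) :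
    ∀ w, (sproutLabel Xb lab w).ncard ≤ k
  | .inl (i, 0) => hXb i
  | .inl (_, _ + 1) => by simp [sproutLabel]
  | .inr x => hlab x

end Sprout

section GeneLabelling

variable {VH : Type*} (H : SimpleGraph VH) (k : ℕ)

/-- A tree decomposition of `H` of width less than `k`. -/
def IsTreeDecomposition {I : Type*} (T : SimpleGraph I) (Xb : I → Set VH) : Prop :=
  T.IsTree ∧
  (∀ v : VH, ∃ i, v ∈ Xb i) ∧
  (∀ u v : VH, H.Adj u v → ∃ i, u ∈ Xb i ∧ v ∈ Xb i) ∧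
  (∀ v : VH, (T.induce {i | v ∈ Xb i}).Preconnected) ∧
  (∀ i, (Xb i).ncard ≤ k)

/-- A `(G,k)`-gene labelling `F` of the rooted tree `N` whose leaves are the edges of `H`,
where `G e` is the set of ends of `e`. -/
def IsGeneLabelling {W : Type*} (N : W → W → Prop) (F : W → Set VH) (leaf : H.edgeSet → W) :
    Prop :=
  IsRootedTree N ∧
  Function.Injective leaf ∧
  (∀ e : H.edgeSet, IsSink N (leaf e)) ∧
  (∀ w : W, IsSink N w → ∃ e : H.edgeSet, leaf e = w) ∧
  (∀ e : H.edgeSet, F (leaf e) = {v : VH | v ∈ (e : Sym2 VH)}) ∧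
  (∀ w : W, (F w).ncard ≤ k) ∧
  (∀ g : VH, RootedOn N {w | g ∈ F w})

variable {H k}

theorem IsTreeDecomposition.exists_isGeneLabelling [Finite VH] {I : Type} {T : SimpleGraph I}
    {Xb : I → Set VH} (h : IsTreeDecomposition H k T Xb) :
    ∃ (W : Type) (N : W → W → Prop) (F : W → Set VH) (leaf : H.edgeSet → W),
      IsGeneLabelling H k N F leaf := by
  obtain ⟨hT, -, hedge, hconn, hcard⟩ := h
  obtain ⟨ρ⟩ := hT.connected.nonempty
  have hends : ∀ e : H.edgeSet, ∃ i, {v | v ∈ (e : Sym2 VH)} ⊆ Xb i := by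
    rintro ⟨e, he⟩
    induction e using Sym2.ind with
    | _ u v =>
      obtain ⟨i, hu, hv⟩ := hedge u v he
      exact ⟨i, fun x hx => by rcases Sym2.mem_iff.1 hx with rfl | rfl <;> assumption⟩
  choose pick hpick using hends
  obtain ⟨n, ⟨ε⟩⟩ := Finite.exists_equiv_fin H.edgeSet
  refine ⟨I × ℕ ⊕ Fin n, Sprout (T.orientFrom ρ) (pick ∘ ε.symm),
    sproutLabel Xb fun x => {v | v ∈ ((ε.symm x : H.edgeSet) : Sym2 VH)}, Sum.inr ∘ ε,
    (hT.isRootedTree_orientFrom ρ).sprout _, Sum.inr_injective.comp ε.injective,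
    fun e => isSink_sprout_iff.2 ⟨_, rfl⟩, fun w hw => ?_, fun e => by simp [sproutLabel],
    ncard_sproutLabel_le hcard fun x => (Set.ncard_le_ncard (hpick _)).trans (hcard _),
    fun g => rootedOn_sprout (hT.rootedOn_orientFrom ρ (hconn g)) fun x hx => hpick _ hx⟩
  obtain ⟨x, rfl⟩ := isSink_sprout_iff.1 hw
  exact ⟨ε.symm x, by simp⟩

theorem IsGeneLabelling.exists_isTreeDecomposition [Finite VH] {W : Type} {N : W → W → Prop}
    {F : W → Set VH} {leaf : H.edgeSet → W} (hk : 0 < k) (h : IsGeneLabelling H k N F leaf) :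
    ∃ (I : Type) (T : SimpleGraph I) (Xb : I → Set VH), IsTreeDecomposition H k T Xb := by
  obtain ⟨hN, -, -, -, hleaf, hcard, hroot⟩ := h
  obtain ⟨ρ, -⟩ := hN.1
  obtain ⟨m, ⟨ε⟩⟩ := Finite.exists_equiv_fin {v : VH // ∀ w, v ∉ F w}
  let lab : Fin m → Set VH := fun j => {(ε.symm j : VH)}
  refine ⟨W × ℕ ⊕ Fin m, fromRel (Sprout N fun _ => ρ), sproutLabel F lab,
    (hN.sprout _).isTree_fromRel, fun v => ?_, fun u v huv => ?_, fun v => ?_,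
    ncard_sproutLabel_le hcard fun j => (Set.ncard_singleton _).trans_le hk⟩
  · by_cases hv : ∃ w, v ∈ F w
    · obtain ⟨w, hw⟩ := hv
      exact ⟨.inl (w, 0), hw⟩
    · push Not at hv
      exact ⟨.inr (ε ⟨v, hv⟩), by simp [sproutLabel, lab]⟩
  · refine ⟨.inl (leaf ⟨s(u, v), huv⟩, 0), ?_, ?_⟩ <;> simp [sproutLabel, hleaf]
  · by_cases hv : ∃ w, v ∈ F w
    · refine (rootedOn_sprout (hroot v) fun j hj => ?_).preconnected_induce_fromRel
      obtain ⟨w, hw⟩ := hv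
      rw [Set.mem_singleton_iff.1 hj] at hw
      exact absurd hw ((ε.symm j).2 w)
    · push Not at hv
      have hsub : {x | v ∈ sproutLabel F lab x} ⊆ {.inr (ε ⟨v, hv⟩)} := by
        rintro (⟨w, _ | s⟩ | j) hx
        · exact absurd hx (hv w)
        · exact hx.elim
        · obtain rfl : v = ε.symm j := hx
          simp
      have := Set.subsingleton_coe _ |>.2 (Set.subsingleton_singleton.anti hsub)
      exact Preconnected.of_subsingleton

end GeneLabelling

/-- A finite graph `H` has treewidth at most `k - 1` (a tree decomposition with all bags
of size at most `k`) if and only if, taking `𝒳 = E_H`, `𝒢 = V_H` and `G(e) = ` the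
endpoints of `e`, there exists a tree `N` whose leaf set is in bijection with `𝒳`
admitting a `(G,k)`-gene labelling. -/
theorem stmt8 {VH : Type*} [Fintype VH] (H : SimpleGraph VH) (k : ℕ) (hk : 0 < k) :
    (∃ (I : Type) (T : SimpleGraph I) (Xb : I → Set VH),
      T.IsTree ∧
      (∀ v : VH, ∃ i, v ∈ Xb i) ∧
      (∀ u v : VH, H.Adj u v → ∃ i, u ∈ Xb i ∧ v ∈ Xb i) ∧
      (∀ v : VH, (T.induce {i | v ∈ Xb i}).Preconnected) ∧
      (∀ i, (Xb i).ncard ≤ k)) ↔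
    (∃ (W : Type) (N : W → W → Prop) (F : W → Set VH) (leaf : H.edgeSet → W),
      IsRootedTree N ∧
      Function.Injective leaf ∧
      (∀ e : H.edgeSet, IsSink N (leaf e)) ∧
      (∀ w : W, IsSink N w → ∃ e : H.edgeSet, leaf e = w) ∧
      (∀ e : H.edgeSet, F (leaf e) = {v : VH | v ∈ (e : Sym2 VH)}) ∧
      (∀ w : W, (F w).ncard ≤ k) ∧
      (∀ g : VH, RootedOn N {w | g ∈ F w})) := by
  constructor
  · rintro ⟨I, T, Xb, h⟩
    exact IsTreeDecomposition.exists_isGeneLabelling h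
  · rintro ⟨W, N, F, leaf, h⟩
    exact IsGeneLabelling.exists_isTreeDecomposition hk h
end

section
/- Let T be a rooted phylogenetic tree on leaf set 𝒳, G : 𝒳 → Set 𝒢 a genome assignment with |G(x)| ≤ k for all x ∈ 𝒳, and k a positive integer with |𝒢| ≥ k. Then there exists a rooted acyclic digraph N obtained from T by adding at most ⌈(|𝒢| − k)/k⌉·(|𝒳| + 1) new arcs (and at most ⌈(|𝒢| − k)/k⌉ new vertices) that admits a (G,k)-gene labelling F: F(x) = G(x) for leaves x, |F(v)| ≤ k for all vertices v, and for each g ∈ 𝒢 the set {v : g ∈ F(v)} induces a rooted (hence connected) subdigraph of N. -/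
/-!
Split the genes into a first block of at most `k` genes and `⌈(|𝒢| - k) / k⌉` further blocks of
at most `k` genes. A gene of the first block is put on every ancestor of a leaf carrying it; this
vertex set is closed under taking ancestors, so it is rooted at `ρ`. Every further block gets a
new vertex, a child of `ρ` and a parent of each leaf carrying a gene of the block, so each of
its genes spans a star. This adds `f` arcs out of `ρ` and at most `f` arcs into each leaf. No
cycle appears, because new vertices only point to leaves, which stay sinks as `ρ` is not a leaf.
-/

open Relation Set

theorem Set.ncard_le_of_injOn_of_div_eq {α : Type*} {s : Set α} {φ : α → ℕ} {k c : ℕ}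
    (hk : 0 < k) (hφ : InjOn φ s) (hc : ∀ a ∈ s, φ a / k = c) : s.ncard ≤ k := by
  have hmaps : ∀ a ∈ s, φ a ∈ Ico (c * k) (c * k + k) := fun a ha => by
    have := (Nat.div_eq_iff hk).1 (hc a ha)
    exact ⟨this.1, by omega⟩
  simpa using ncard_le_ncard_of_injOn φ hmaps hφ (finite_Ico _ _)

theorem Nat.div_sub_one_lt_ceilDiv {n m k : ℕ} (hk : 0 < k) (hkn : k ≤ n) (hnm : n < m) :
    n / k - 1 < (m - k + k - 1) / k := by
  have hn : 0 < n / k := Nat.div_pos hkn hk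
  have hle : n / k ≤ (m - 1) / k := Nat.div_le_div_right (by omega)
  rw [show m - k + k - 1 = m - 1 by omega]
  omega

/-- The classes are the blocks of `k` consecutive indices in `Fintype.equivFin α`. -/
theorem exists_option_fin_fibres_ncard_le (α : Type*) [Fintype α] {k : ℕ} (hk : 0 < k) :
    ∃ β : α → Option (Fin ((Fintype.card α - k + k - 1) / k)),
      ∀ o, {a | β a = o}.ncard ≤ k := by
  set e := Fintype.equivFin α
  let β : α → Option (Fin ((Fintype.card α - k + k - 1) / k)) := fun a =>
    if h : (e a : ℕ) < k then none
    else some ⟨(e a : ℕ) / k - 1, Nat.div_sub_one_lt_ceilDiv hk (by omega) (e a).isLt⟩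
  have hblock : ∀ a, (e a : ℕ) / k = (β a).elim 0 (fun j => (j : ℕ) + 1) := fun a => by
    by_cases h : (e a : ℕ) < k
    · simp [β, h, Nat.div_eq_of_lt h]
    · have := Nat.div_pos (not_lt.1 h) hk
      simp only [β, h, dite_false, Option.elim_some]
      omega
  refine ⟨β, fun o => ncard_le_of_injOn_of_div_eq (c := o.elim 0 fun j => (j : ℕ) + 1) hk
    (fun a _ b _ hab => e.injective (Fin.ext hab)) fun a ha => ?_⟩
  rw [hblock, show β a = o from ha]

theorem IsSink.eq_of_reflTransGen {V : Type*} {A : V → V → Prop} {s v : V} (hs : IsSink A s)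
    (h : ReflTransGen A s v) : v = s := by
  rcases h.cases_head with h | ⟨c, hc, -⟩
  · exact h.symm
  · exact (hs c hc).elim

theorem Relation.ReflTransGen.restrict {α : Type*} {r : α → α → Prop} {S : Set α} {a b : α}
    (hS : ∀ x y, r x y → y ∈ S → x ∈ S) (h : ReflTransGen r a b) (hb : b ∈ S) :
    ReflTransGen (fun x y => r x y ∧ x ∈ S ∧ y ∈ S) a b := by
  induction h using ReflTransGen.head_induction_on with
  | refl => exact .refl
  | @head _ c hac _ ih =>
    have hc : c ∈ S := by
      rcases ih.cases_head with h | ⟨_, ⟨-, hc, -⟩, -⟩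
      · exact h ▸ hb
      · exact hc
    exact .head ⟨hac, hS _ _ hac hc, hc⟩ ih

section AddVertices

variable {V ι : Type*} {T : V → V → Prop} {ρ : V} {E : ι → V → Prop}

variable (T ρ E) in
def addVertices : V ⊕ ι → V ⊕ ι → Prop
  | .inl a, .inl b => T a b
  | .inl a, .inr _ => a = ρ
  | .inr j, .inl b => E j b
  | .inr _, .inr _ => False

theorem addVertices.isSink_inl (hρ : ¬IsSink T ρ) {s : V} (hs : IsSink T s) :
    IsSink (addVertices T ρ E) (.inl s) := by
  rintro (b | j) h
  · exact hs b h
  · exact hρ ((show s = ρ from h) ▸ hs)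

theorem addVertices.reflTransGen_root (hroot : ∀ v, ReflTransGen T ρ v) :
    ∀ w, ReflTransGen (addVertices T ρ E) (.inl ρ) w
  | .inl v => (hroot v).lift Sum.inl fun _ _ h => h
  | .inr _ => .single rfl

section Sinks

variable (hE : ∀ j b, E j b → IsSink T b) (hρ : ¬IsSink T ρ)
include hE hρ

theorem addVertices.eq_inr_or_isSink_of_reflTransGen {j : ι} {w : V ⊕ ι}
    (h : ReflTransGen (addVertices T ρ E) (.inr j) w) :
    w = .inr j ∨ ∃ s, IsSink T s ∧ w = .inl s := by
  rcases h.cases_head with h | ⟨b | _, hb, h⟩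
  · exact .inl h.symm
  · exact .inr ⟨b, hE j b hb, (isSink_inl hρ (hE j b hb)).eq_of_reflTransGen h⟩
  · exact hb.elim

theorem addVertices.reflTransGen_of_inl {a b : V} (hb : ¬IsSink T b)
    (h : ReflTransGen (addVertices T ρ E) (.inl a) (.inl b)) : ReflTransGen T a b := by
  generalize hw : (Sum.inl a : V ⊕ ι) = w at h
  induction h using ReflTransGen.head_induction_on generalizing a with
  | refl => cases hw; exact .refl
  | @head _ c hstep hrest ih =>
    subst hw
    rcases c with c | j
    · exact .head hstep (ih rfl)
    · rcases eq_inr_or_isSink_of_reflTransGen hE hρ hrest with h | ⟨s, hs, h⟩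
      · cases h
      · cases h; exact (hb hs).elim

theorem addVertices.not_transGen_self (hacyc : ∀ a, ¬TransGen T a a) (w : V ⊕ ι) :
    ¬TransGen (addVertices T ρ E) w w := by
  intro hw
  obtain ⟨c, hstep, hrest⟩ := TransGen.head'_iff.mp hw
  match w, c, hstep with
  | .inl a, .inl b, hstep =>
    exact hacyc a (.head' hstep (reflTransGen_of_inl hE hρ (fun h => h b hstep) hrest))
  | .inl a, .inr j, (hstep : a = ρ) =>
    rcases eq_inr_or_isSink_of_reflTransGen hE hρ hrest with h | ⟨s, hs, h⟩
    · cases h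
    · cases h; exact hρ (hstep ▸ hs)
  | .inr j, .inl b, hstep =>
    cases (isSink_inl hρ (hE j b hstep)).eq_of_reflTransGen hrest

end Sinks

theorem addVertices.ncard_newArcs_le [Finite V] [Finite ι] (hE : ∀ j b, E j b → IsSink T b) :
    {q : (V ⊕ ι) × (V ⊕ ι) | addVertices T ρ E q.1 q.2 ∧
        ∀ a b : V, q = (.inl a, .inl b) → ¬T a b}.ncard ≤
      Nat.card ι * ({x : V | IsSink T x}.ncard + 1) := by
  let arc : ι × Option {x // IsSink T x} → (V ⊕ ι) × (V ⊕ ι)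
    | (j, none) => (.inl ρ, .inr j)
    | (j, some s) => (.inr j, .inl s)
  have hsub : {q : (V ⊕ ι) × (V ⊕ ι) | addVertices T ρ E q.1 q.2 ∧
      ∀ a b : V, q = (.inl a, .inl b) → ¬T a b} ⊆ range arc := by
    rintro ⟨a | j, b | j'⟩ ⟨hq, hnew⟩
    · exact (hnew a b rfl hq).elim
    · exact ⟨(j', none), by simp [arc, show a = ρ from hq]⟩
    · exact ⟨(j, some ⟨b, hE j b hq⟩), rfl⟩
    · exact hq.elim
  calc _ ≤ (range arc).ncard := ncard_le_ncard hsub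
    _ ≤ Nat.card (ι × Option {x // IsSink T x}) := Finite.card_range_le arc
    _ = _ := by rw [Nat.card_prod, Finite.card_option]; rfl

end AddVertices

section GeneLabelling

variable {V ι 𝒢 : Type*} {T : V → V → Prop} {ρ : V} {Gm : V → Set 𝒢} {β : 𝒢 → Option ι}

variable (T Gm) in
def leafGenes (v : V) : Set 𝒢 := {g | ∃ s, IsSink T s ∧ ReflTransGen T v s ∧ g ∈ Gm s}

theorem leafGenes_anti {u v : V} (h : ReflTransGen T u v) : leafGenes T Gm v ⊆ leafGenes T Gm u :=
  fun _ ⟨s, hs, hvs, hg⟩ => ⟨s, hs, h.trans hvs, hg⟩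

theorem leafGenes_of_isSink {v : V} (hv : IsSink T v) : leafGenes T Gm v = Gm v := by
  ext g
  refine ⟨fun ⟨s, _, hvs, hg⟩ => ?_, fun hg => ⟨v, hv, .refl, hg⟩⟩
  rwa [← hv.eq_of_reflTransGen hvs]

variable (T Gm β) in
/-- `β` sorts the genes: those with `β g = none` are carried along the tree, those with
`β g = some j` by the new vertex `j`, which is attached to every leaf carrying one of them. -/
def geneAttach (j : ι) (b : V) : Prop := IsSink T b ∧ ∃ g ∈ Gm b, β g = some j

open Classical in
variable (T Gm β) in
noncomputable def geneLabelling : V ⊕ ι → Set 𝒢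
  | .inl v => if IsSink T v then Gm v else {g ∈ leafGenes T Gm v | β g = none}
  | .inr j => {g | β g = some j}

theorem geneLabelling_inl_of_isSink {x : V} (hx : IsSink T x) :
    geneLabelling T Gm β (.inl x) = Gm x := if_pos hx

theorem mem_geneLabelling_inl_of_eq_none {g : 𝒢} (hg : β g = none) {v : V} :
    g ∈ geneLabelling T Gm β (.inl v) ↔ g ∈ leafGenes T Gm v := by
  by_cases hv : IsSink T v
  · simp [geneLabelling, hv, leafGenes_of_isSink hv]
  · simp [geneLabelling, hv, hg]

theorem mem_geneLabelling_inl_of_eq_some {g : 𝒢} {j : ι} (hg : β g = some j) {v : V} :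
    g ∈ geneLabelling T Gm β (.inl v) ↔ IsSink T v ∧ g ∈ Gm v := by
  by_cases hv : IsSink T v <;> simp [geneLabelling, hv, hg]

theorem ncard_geneLabelling_le [Finite 𝒢] {k : ℕ} (hGm : ∀ x, IsSink T x → (Gm x).ncard ≤ k)
    (hβ : ∀ o, {g | β g = o}.ncard ≤ k) : ∀ w, (geneLabelling T Gm β w).ncard ≤ k
  | .inl v => by
    by_cases hv : IsSink T v
    · rw [geneLabelling_inl_of_isSink hv]
      exact hGm v hv
    · simp only [geneLabelling, hv, if_false]
      exact (ncard_le_ncard fun g hg => hg.2).trans (hβ none)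
  | .inr j => hβ (some j)

theorem rootedOn_geneLabelling_of_eq_none (hroot : ∀ v, ReflTransGen T ρ v) {g : 𝒢}
    (hg : β g = none) :
    RootedOn (addVertices T ρ (geneAttach T Gm β)) {w | g ∈ geneLabelling T Gm β w} := by
  have hinr (j : ι) : g ∉ geneLabelling T Gm β (.inr j) := by simp [geneLabelling, hg]
  rintro ⟨(v | j), hv⟩
  · have hmem {u : V} : Sum.inl u ∈ {w | g ∈ geneLabelling T Gm β w} ↔ g ∈ leafGenes T Gm u :=
      mem_geneLabelling_inl_of_eq_none hg
    refine ⟨.inl ρ, hmem.2 (leafGenes_anti (hroot v) (hmem.1 hv)), ?_⟩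
    rintro (u | j) hu
    · have hpath := (hroot u).restrict (S := {u | g ∈ leafGenes T Gm u})
        (fun _ _ hxy hy => leafGenes_anti (.single hxy) hy) (hmem.1 hu)
      exact hpath.lift Sum.inl fun _ _ ⟨hxy, hx, hy⟩ => ⟨hxy, hmem.2 hx, hmem.2 hy⟩
    · exact (hinr j hu).elim
  · exact (hinr j hv).elim

theorem rootedOn_geneLabelling_of_eq_some {g : 𝒢} {j : ι} (hg : β g = some j) :
    RootedOn (addVertices T ρ (geneAttach T Gm β)) {w | g ∈ geneLabelling T Gm β w} := by
  have hj : Sum.inr j ∈ {w | g ∈ geneLabelling T Gm β w} := hg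
  refine fun _ => ⟨.inr j, hj, ?_⟩
  rintro (v | j') hv
  · obtain ⟨hvs, hgv⟩ := (mem_geneLabelling_inl_of_eq_some hg).1 hv
    exact .single ⟨⟨hvs, g, hgv, hg⟩, hj, hv⟩
  · obtain rfl : j' = j := Option.some_injective _ (hv.symm.trans hg)
    exact .refl

end GeneLabelling

theorem stmt12_general {V 𝒢 : Type*} [Fintype V] [Fintype 𝒢]
    (T : V → V → Prop) (ρ : V)
    (hρ : ∀ v : V, Relation.ReflTransGen T ρ v)
    (hacyc : ∀ a : V, ¬ Relation.TransGen T a a)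
    (hphylo : ∃ a b : V, a ≠ b ∧ T ρ a ∧ T ρ b)
    (Gm : V → Set 𝒢) (k : ℕ) (hk : 0 < k)
    (hGm : ∀ x : V, IsSink T x → (Gm x).ncard ≤ k) :
    ∃ (f : ℕ) (N : (V ⊕ Fin f) → (V ⊕ Fin f) → Prop) (F : (V ⊕ Fin f) → Set 𝒢),
      f ≤ (Fintype.card 𝒢 - k + k - 1) / k ∧
      (∀ a b : V, T a b → N (Sum.inl a) (Sum.inl b)) ∧
      ({q : (V ⊕ Fin f) × (V ⊕ Fin f) | N q.1 q.2 ∧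
          ∀ a b : V, q = (Sum.inl a, Sum.inl b) → ¬ T a b}).ncard ≤
        ((Fintype.card 𝒢 - k + k - 1) / k) * ({x : V | IsSink T x}.ncard + 1) ∧
      (∀ w : V ⊕ Fin f, Relation.ReflTransGen N (Sum.inl ρ) w) ∧
      (∀ w : V ⊕ Fin f, ¬ Relation.TransGen N w w) ∧
      (∀ x : V, IsSink T x → F (Sum.inl x) = Gm x) ∧
      (∀ w : V ⊕ Fin f, (F w).ncard ≤ k) ∧
      (∀ g : 𝒢, RootedOn N {w | g ∈ F w}) := by
  obtain ⟨β, hβ⟩ := exists_option_fin_fibres_ncard_le 𝒢 hk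
  have hρ_not_sink : ¬IsSink T ρ := fun h =>
    let ⟨a, _, _, ha, _⟩ := hphylo
    h a ha
  have hE : ∀ j b, geneAttach T Gm β j b → IsSink T b := fun _ _ h => h.1
  refine ⟨_, addVertices T ρ (geneAttach T Gm β), geneLabelling T Gm β, le_rfl,
    fun _ _ h => h, ?_, addVertices.reflTransGen_root hρ,
    addVertices.not_transGen_self hE hρ_not_sink hacyc, fun _ => geneLabelling_inl_of_isSink,
    ncard_geneLabelling_le hGm hβ, fun g => ?_⟩
  · simpa using addVertices.ncard_newArcs_le (ρ := ρ) hE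
  · cases hg : β g
    · exact rootedOn_geneLabelling_of_eq_none hρ hg
    · exact rootedOn_geneLabelling_of_eq_some hg

/-- Theorem 1(ii): given a rooted phylogenetic tree `T` with leaf set `X`, a genome
assignment `Gm` with `|Gm x| ≤ k` on leaves and `|𝒢| ≥ k > 0`, there is a rooted acyclic
digraph `N` obtained from `T` by adding at most `f = ⌈(|𝒢|-k)/k⌉` new vertices and at most
`f·(|X|+1)` new arcs that admits a `(G,k)`-gene labelling. -/
theorem stmt12 {V 𝒢 : Type*} [Fintype V] [Fintype 𝒢]
    (T : V → V → Prop) (ρ : V)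
    (hρ : ∀ v : V, Relation.ReflTransGen T ρ v)
    (hparent : ∀ a b c : V, T a c → T b c → a = b)
    (hacyc : ∀ a : V, ¬ Relation.TransGen T a a)
    (hphylo : ∃ a b : V, a ≠ b ∧ T ρ a ∧ T ρ b)
    (Gm : V → Set 𝒢) (k : ℕ) (hk : 0 < k) (hcard : k ≤ Fintype.card 𝒢)
    (hGm : ∀ x : V, IsSink T x → (Gm x).ncard ≤ k) :
    ∃ (f : ℕ) (N : (V ⊕ Fin f) → (V ⊕ Fin f) → Prop) (F : (V ⊕ Fin f) → Set 𝒢),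
      f ≤ (Fintype.card 𝒢 - k + k - 1) / k ∧
      (∀ a b : V, T a b → N (Sum.inl a) (Sum.inl b)) ∧
      ({q : (V ⊕ Fin f) × (V ⊕ Fin f) | N q.1 q.2 ∧
          ∀ a b : V, q = (Sum.inl a, Sum.inl b) → ¬ T a b}).ncard ≤
        ((Fintype.card 𝒢 - k + k - 1) / k) * ({x : V | IsSink T x}.ncard + 1) ∧
      (∀ w : V ⊕ Fin f, Relation.ReflTransGen N (Sum.inl ρ) w) ∧
      (∀ w : V ⊕ Fin f, ¬ Relation.TransGen N w w) ∧
      (∀ x : V, IsSink T x → F (Sum.inl x) = Gm x) ∧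
      (∀ w : V ⊕ Fin f, (F w).ncard ≤ k) ∧
      (∀ g : 𝒢, RootedOn N {w | g ∈ F w}) :=
  stmt12_general T ρ hρ hacyc hphylo Gm k hk hGm
end

section
/- Let T be a finite rooted tree, let x₁, x₂ be leaves with lowest common ancestor v, and let N be a digraph obtained from a subdivision T' of T by adding a set A of extra arcs ('lgt-arcs'). Suppose there is an undirected path in N from x₁ to x₂ that avoids v and consists of two directed paths, one ending at x₁ and one ending at x₂. Then either some single lgt-arc (a,d) has lca_{T'}(a,d) = v, or there exist two lgt-arcs (a,b), (c,d) used by the path such that v is the lowest common ancestor in T' of the tail of one and the head of the other, or of the two heads. -/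
/-- The arc `(x,y)` is traversed by the walk recorded in the list `l`. -/
def UsedIn {V : Type*} (l : List V) (x y : V) : Prop :=
  ∃ i : ℕ, l[i]? = some x ∧ l[i + 1]? = some y


/-!
For each walk `pᵢ` let `sᵢ` be the start of its final run of tree arcs: either `sᵢ = t` or `sᵢ`
is the head of an lgt-arc. The tree path from `sᵢ` to `xᵢ` avoids `v`, so `v` lies above `sᵢ`,
and hence `lca s₁ s₂ = v`. If both walks use lgt-arcs, this is the third alternative. They cannot
both be tree paths, since then `t = s₁ = s₂` would give `t = lca t t = v ∈ p₁`. If only `p₂` uses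
lgt-arcs, let `e` be the tail of its first one: `t` lies above `e` but not above `s₂`, so
`lca e s₂ = lca t s₂ = v`.
-/

open Relation

section TreeOrder

variable {W : Type*} {r : W → W → Prop}

theorem reflTransGen_antisymm_of_acyclic (hacyc : ∀ a, ¬ TransGen r a a) {a b : W}
    (hab : ReflTransGen r a b) (hba : ReflTransGen r b a) : a = b := by
  rcases reflTransGen_iff_eq_or_transGen.1 hab with h | h
  · exact h.symm
  · exact (hacyc a (h.trans_left hba)).elim

theorem reflTransGen_total_of_leftUnique (huniq : ∀ a b c, r a c → r b c → a = b) {a b x : W}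
    (hax : ReflTransGen r a x) (hbx : ReflTransGen r b x) :
    ReflTransGen r a b ∨ ReflTransGen r b a := by
  have hswap := ReflTransGen.total_of_right_unique (r := Function.swap r)
    (fun _ _ _ hba hca => huniq _ _ _ hba hca) (reflTransGen_swap.2 hax) (reflTransGen_swap.2 hbx)
  simpa only [reflTransGen_swap, or_comm] using hswap

end TreeOrder

def IsLCAFun {W : Type*} (r : W → W → Prop) (lca : W → W → W) : Prop :=
  ∀ a b : W, ReflTransGen r (lca a b) a ∧ ReflTransGen r (lca a b) b ∧
    ∀ c : W, ReflTransGen r c a → ReflTransGen r c b → ReflTransGen r c (lca a b)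

namespace IsLCAFun

variable {W : Type*} {r : W → W → Prop} {lca : W → W → W}

theorem comm (hlca : IsLCAFun r lca) (hacyc : ∀ a, ¬ TransGen r a a) (a b : W) :
    lca a b = lca b a :=
  reflTransGen_antisymm_of_acyclic hacyc ((hlca b a).2.2 _ (hlca a b).2.1 (hlca a b).1)
    ((hlca a b).2.2 _ (hlca b a).2.1 (hlca b a).1)

theorem eq_left_of_le (hlca : IsLCAFun r lca) (hacyc : ∀ a, ¬ TransGen r a a) {a b : W}
    (hab : ReflTransGen r a b) : lca a b = a :=
  reflTransGen_antisymm_of_acyclic hacyc (hlca a b).1 ((hlca a b).2.2 a .refl hab)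

theorem eq_of_between (hlca : IsLCAFun r lca) (hacyc : ∀ a, ¬ TransGen r a a) {x y a b : W}
    (hxa : ReflTransGen r (lca x y) a) (hax : ReflTransGen r a x)
    (hyb : ReflTransGen r (lca x y) b) (hby : ReflTransGen r b y) : lca a b = lca x y :=
  reflTransGen_antisymm_of_acyclic hacyc
    ((hlca x y).2.2 _ ((hlca a b).1.trans hax) ((hlca a b).2.1.trans hby))
    ((hlca a b).2.2 _ hxa hyb)

theorem eq_of_le_left (hlca : IsLCAFun r lca) (hacyc : ∀ a, ¬ TransGen r a a)
    (huniq : ∀ a b c, r a c → r b c → a = b) {a a' b : W}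
    (haa' : ReflTransGen r a a') (hab : ¬ ReflTransGen r a b) : lca a' b = lca a b := by
  rcases reflTransGen_total_of_leftUnique huniq (hlca a' b).1 haa' with hle | hle
  · exact reflTransGen_antisymm_of_acyclic hacyc ((hlca a b).2.2 _ hle (hlca a' b).2.1)
      ((hlca a' b).2.2 _ ((hlca a b).1.trans haa') (hlca a b).2.1)
  · exact (hab (hle.trans (hlca a' b).2.1)).elim

end IsLCAFun

namespace UsedIn

variable {W : Type*} {l : List W} {x y : W}

theorem cons (a : W) (h : UsedIn l x y) : UsedIn (a :: l) x y := by
  obtain ⟨i, hx, hy⟩ := h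
  exact ⟨i + 1, hx, hy⟩

theorem rel_of_isChain {r : W → W → Prop} (h : UsedIn l x y) (hl : l.IsChain r) : r x y := by
  obtain ⟨i, hx, hy⟩ := h
  obtain ⟨hi, rfl⟩ := List.getElem?_eq_some_iff.1 hy
  obtain ⟨-, rfl⟩ := List.getElem?_eq_some_iff.1 hx
  exact hl.getElem i hi

end UsedIn

section Walks

variable {W : Type*} {r : W → W → Prop}

theorem exists_first_not_rel {l : List W} {t : W} (hl : l.head? = some t) (hnc : ¬ l.IsChain r) :
    ∃ e f, UsedIn l e f ∧ ¬ r e f ∧ ReflTransGen r t e := by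
  obtain ⟨m, rfl⟩ := List.head?_eq_some_iff.1 hl
  induction m generalizing t with
  | nil => exact (hnc (List.isChain_singleton t)).elim
  | cons y m ih =>
    by_cases hty : r t y
    · have hnc' : ¬ (y :: m).IsChain r := fun hc => hnc (List.isChain_cons_cons.2 ⟨hty, hc⟩)
      obtain ⟨e, f, hef, hnef, hye⟩ := ih rfl hnc'
      exact ⟨e, f, hef.cons t, hnef, .head hty hye⟩
    · exact ⟨t, y, ⟨0, rfl, rfl⟩, hty, .refl⟩

/-- `s` is where the final `r`-segment of the walk `l` begins. -/
theorem exists_final_segment (huniq : ∀ a b c, r a c → r b c → a = b) {l : List W} {t x v : W}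
    (hl : l.head? = some t) (hx : l.getLast? = some x) (hvx : ReflTransGen r v x) (hv : v ∉ l) :
    ∃ s, ReflTransGen r v s ∧ ReflTransGen r s x ∧ (s = t ∨ ∃ a, UsedIn l a s ∧ ¬ r a s) := by
  obtain ⟨m, rfl⟩ := List.head?_eq_some_iff.1 hl
  induction m generalizing t with
  | nil =>
    obtain rfl : t = x := by simpa using hx
    exact ⟨t, hvx, .refl, .inl rfl⟩
  | cons y m ih =>
    obtain ⟨s, hvs, hsx, hs⟩ := ih rfl (List.getLast?_cons_cons ▸ hx) (fun h => hv (.tail t h))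
    rcases hs with rfl | ⟨a, has, hnas⟩
    · by_cases hty : r t s
      · refine ⟨t, ?_, .head hty hsx, .inl rfl⟩
        rcases hvs.cases_tail with rfl | ⟨p, hvp, hps⟩
        · exact (hv (.tail t List.mem_cons_self)).elim
        · exact huniq p t s hps hty ▸ hvp
      · exact ⟨s, hvs, hsx, .inr ⟨t, ⟨0, rfl, rfl⟩, hty⟩⟩
    · exact ⟨s, hvs, hsx, .inr ⟨a, has.cons t, hnas⟩⟩

end Walks

theorem exists_not_rel_lca_eq {W : Type*} {r : W → W → Prop} {lca : W → W → W}
    (hlca : IsLCAFun r lca) (hacyc : ∀ a, ¬ TransGen r a a)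
    (huniq : ∀ a b c, r a c → r b c → a = b) {l : List W} {s t v : W}
    (hl : l.head? = some t) (hnc : ¬ l.IsChain r) (hts : lca t s = v) (htv : t ≠ v) :
    ∃ e f, UsedIn l e f ∧ ¬ r e f ∧ lca e s = v := by
  obtain ⟨e, f, hef, hnef, hte⟩ := exists_first_not_rel hl hnc
  have hnts : ¬ ReflTransGen r t s := fun h => htv ((hlca.eq_left_of_le hacyc h).symm.trans hts)
  exact ⟨e, f, hef, hnef, (hlca.eq_of_le_left hacyc huniq hte hnts).trans hts⟩

theorem stmt13_general {W : Type*} (T' : W → W → Prop) (hT' : IsRootedTree T')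
    (lca : W → W → W)
    (hlca : ∀ a b : W, Relation.ReflTransGen T' (lca a b) a ∧
        Relation.ReflTransGen T' (lca a b) b ∧
        ∀ c : W, Relation.ReflTransGen T' c a → Relation.ReflTransGen T' c b →
          Relation.ReflTransGen T' c (lca a b))
    (x₁ x₂ v : W)
    (hv : lca x₁ x₂ = v)
    (t : W) (p₁ p₂ : List W)
    (hhead₁ : p₁.head? = some t) (hhead₂ : p₂.head? = some t)
    (hlast₁ : p₁.getLast? = some x₁) (hlast₂ : p₂.getLast? = some x₂)
    (havoid₁ : v ∉ p₁) (havoid₂ : v ∉ p₂) :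
    (∃ a d : W, (UsedIn p₁ a d ∨ UsedIn p₂ a d) ∧ ¬ T' a d ∧ lca a d = v) ∨
    (∃ a b c d : W, (UsedIn p₁ a b ∨ UsedIn p₂ a b) ∧ (UsedIn p₁ c d ∨ UsedIn p₂ c d) ∧
      ¬ T' a b ∧ ¬ T' c d ∧ (lca a d = v ∨ lca c b = v ∨ lca b d = v)) := by
  obtain ⟨-, huniq, hacyc⟩ := hT'
  have hlca : IsLCAFun T' lca := hlca
  have htv : t ≠ v := fun h => havoid₁ (h ▸ List.mem_of_mem_head? hhead₁)
  have lca_eq : ∀ y z, ReflTransGen T' v y → ReflTransGen T' y x₁ →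
      ReflTransGen T' v z → ReflTransGen T' z x₂ → lca y z = v := by
    subst hv
    exact fun y z hvy hyx hvz hzx => hlca.eq_of_between hacyc hvy hyx hvz hzx
  obtain ⟨s₁, hvs₁, hs₁x₁, hs₁ | ⟨a₁, hused₁, hnt₁⟩⟩ :=
    exists_final_segment huniq hhead₁ hlast₁ (hv ▸ (hlca x₁ x₂).1) havoid₁ <;>
  obtain ⟨s₂, hvs₂, hs₂x₂, hs₂ | ⟨a₂, hused₂, hnt₂⟩⟩ :=
    exists_final_segment huniq hhead₂ hlast₂ (hv ▸ (hlca x₁ x₂).2.1) havoid₂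
  · subst s₁ s₂
    have hlca_self : lca t t = t := hlca.eq_left_of_le hacyc .refl
    exact (htv (hlca_self.symm.trans (lca_eq t t hvs₁ hs₁x₁ hvs₂ hs₂x₂))).elim
  · subst s₁
    obtain ⟨e, f, hef, hnef, hes⟩ := exists_not_rel_lca_eq hlca hacyc huniq hhead₂
      (fun hc => hnt₂ (hused₂.rel_of_isChain hc)) (lca_eq t s₂ hvs₁ hs₁x₁ hvs₂ hs₂x₂) htv
    exact .inr ⟨e, f, a₂, s₂, .inr hef, .inr hused₂, hnef, hnt₂, .inl hes⟩
  · subst s₂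
    obtain ⟨e, f, hef, hnef, hes⟩ := exists_not_rel_lca_eq hlca hacyc huniq hhead₁
      (fun hc => hnt₁ (hused₁.rel_of_isChain hc))
      ((hlca.comm hacyc t s₁).trans (lca_eq s₁ t hvs₁ hs₁x₁ hvs₂ hs₂x₂)) htv
    exact .inr ⟨e, f, a₁, s₁, .inl hef, .inl hused₁, hnef, hnt₁, .inl hes⟩
  · exact .inr ⟨a₁, s₁, a₂, s₂, .inl hused₁, .inr hused₂, hnt₁, hnt₂,
      .inr (.inr (lca_eq s₁ s₂ hvs₁ hs₁x₁ hvs₂ hs₂x₂))⟩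

/-- The structural case analysis of Theorem 1(i): if the leaves `x₁,x₂` have lowest common
ancestor `v` in the tree `T'` and some undirected path of `N = T' ∪ A` from `x₁` to `x₂`
avoiding `v` consists of two directed paths, one ending at `x₁` and one at `x₂` (from a
common top vertex `t`), then either a single lgt-arc `(a,d)` used by the path has
`lca(a,d) = v`, or two used lgt-arcs `(a,b)`, `(c,d)` satisfy `lca a d = v`, `lca c b = v`
or `lca b d = v`. -/
theorem stmt13 {W : Type*} (T' : W → W → Prop) (hT' : IsRootedTree T')
    (A : W → W → Prop)
    (lca : W → W → W)
    (hlca : ∀ a b : W, Relation.ReflTransGen T' (lca a b) a ∧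
        Relation.ReflTransGen T' (lca a b) b ∧
        ∀ c : W, Relation.ReflTransGen T' c a → Relation.ReflTransGen T' c b →
          Relation.ReflTransGen T' c (lca a b))
    (x₁ x₂ v : W)
    (hx₁ : ∀ w : W, ¬ T' x₁ w) (hx₂ : ∀ w : W, ¬ T' x₂ w)
    (hv : lca x₁ x₂ = v)
    (t : W) (p₁ p₂ : List W)
    (hchain₁ : p₁.Chain' (fun a b => T' a b ∨ A a b))
    (hchain₂ : p₂.Chain' (fun a b => T' a b ∨ A a b))
    (hnd₁ : p₁.Nodup) (hnd₂ : p₂.Nodup)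
    (hhead₁ : p₁.head? = some t) (hhead₂ : p₂.head? = some t)
    (hlast₁ : p₁.getLast? = some x₁) (hlast₂ : p₂.getLast? = some x₂)
    (havoid₁ : v ∉ p₁) (havoid₂ : v ∉ p₂) :
    (∃ a d : W, (UsedIn p₁ a d ∨ UsedIn p₂ a d) ∧ ¬ T' a d ∧ lca a d = v) ∨
    (∃ a b c d : W, (UsedIn p₁ a b ∨ UsedIn p₂ a b) ∧ (UsedIn p₁ c d ∨ UsedIn p₂ c d) ∧
      ¬ T' a b ∧ ¬ T' c d ∧ (lca a d = v ∨ lca c b = v ∨ lca b d = v)) :=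
  stmt13_general T' hT' lca hlca x₁ x₂ v hv t p₁ p₂ hhead₁ hhead₂ hlast₁ hlast₂ havoid₁ havoid₂
end

section
/- Let T be a rooted tree with vertex set V and leaf set 𝒳, let 𝒢 be a finite set of genes, G : 𝒳 → Set 𝒢, and k a positive integer. For v ∈ V let n(v) be the number of genes g ∈ 𝒢 for which there exist leaves x₁, x₂ with g ∈ G(x₁), g ∈ G(x₂) and lca(x₁,x₂) = v. Let ℓ(T,G,k) be the minimum number of arcs that must be added to T so that the resulting network admits a (G,k)-gene labelling. Then ℓ(T,G,k) ≥ √((2/3)·|{v ∈ V : n(v) > k}|). -/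
/-- `l` is a directed path in the digraph `D` from `a` to `b`. -/
def IsDirPath {V : Type*} (D : V → V → Prop) (a b : V) (l : List V) : Prop :=
  l ≠ [] ∧ l.head? = some a ∧ l.getLast? = some b ∧ l.Chain' D ∧ l.Nodup

open Relation

namespace Relation

variable {α : Type*} {r q : α → α → Prop} {a b c s t : α}

theorem ReflTransGen.transGen_of_ne (h : ReflTransGen r a b) (hne : a ≠ b) : TransGen r a b :=
  (reflTransGen_iff_eq_or_transGen.mp h).resolve_left hne.symm

theorem ReflTransGen.antisymm_of_acyclic (hr : ∀ a, ¬ TransGen r a a)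
    (hab : ReflTransGen r a b) (hba : ReflTransGen r b a) : a = b :=
  by_contra fun hne => hr a ((hab.transGen_of_ne hne).trans_left hba)

theorem ReflTransGen.total_of_left_unique (U : Relator.LeftUnique r)
    (hac : ReflTransGen r a c) (hbc : ReflTransGen r b c) :
    ReflTransGen r a b ∨ ReflTransGen r b a :=
  have U' : Relator.RightUnique (Function.swap r) := fun _ _ _ h₁ h₂ => U h₁ h₂
  ((ReflTransGen.total_of_right_unique U' (reflTransGen_swap.mpr hac)
    (reflTransGen_swap.mpr hbc)).imp reflTransGen_swap.mp reflTransGen_swap.mp).symm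

theorem ReflTransGen.inf_or_exists_last_not (h : ReflTransGen r a b) :
    ReflTransGen (r ⊓ q) a b ∨
      ∃ s t, r s t ∧ ¬ q s t ∧ ReflTransGen r a s ∧ ReflTransGen (r ⊓ q) t b := by
  induction h using ReflTransGen.head_induction_on with
  | refl => exact Or.inl .refl
  | @head a y hay hyb ih =>
    rcases ih with hyb' | ⟨s, t, hst, hq, hys, htb⟩
    · by_cases hq : q a y
      · exact Or.inl (.head ⟨hay, hq⟩ hyb')
      · exact Or.inr ⟨a, y, hay, hq, .refl, hyb'⟩
    · exact Or.inr ⟨s, t, hst, hq, .head hay hys, htb⟩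

theorem ReflTransGen.exists_first_not (h : ReflTransGen r a s) (hst : r s t) (hq : ¬ q s t) :
    ∃ s' t', r s' t' ∧ ¬ q s' t' ∧ ReflTransGen (r ⊓ q) a s' := by
  induction h using ReflTransGen.head_induction_on with
  | refl => exact ⟨s, t, hst, hq, .refl⟩
  | @head a y hay _ ih =>
    by_cases hqa : q a y
    · obtain ⟨s', t', hst', hq', hys'⟩ := ih
      exact ⟨s', t', hst', hq', .head ⟨hay, hqa⟩ hys'⟩
    · exact ⟨a, y, hay, hqa, .refl⟩

abbrev induce (r : α → α → Prop) (S : Set α) : α → α → Prop :=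
  fun x y => r x y ∧ x ∈ S ∧ y ∈ S

end Relation

theorem List.mem_tail_dropLast_of_getElem? {α : Type*} {l : List α} {i : ℕ} {x : α}
    (h : l[i]? = some x) (h0 : 0 < i) (hi : i + 1 < l.length) : x ∈ l.tail.dropLast := by
  obtain ⟨-, rfl⟩ := List.getElem?_eq_some_iff.mp h
  have hlen : i - 1 < l.tail.dropLast.length := by
    simp only [List.length_dropLast, List.length_tail]; omega
  have : l.tail.dropLast[i - 1] = l[i] := by
    simp only [List.getElem_dropLast, List.getElem_tail, Nat.sub_add_cancel h0]
  exact this ▸ List.getElem_mem hlen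

theorem List.reflTransGen_of_mem_of_getLast? {α : Type*} {r : α → α → Prop} {l : List α}
    {x y : α} (hl : l.IsChain r) (hx : x ∈ l) (hy : l.getLast? = some y) :
    ReflTransGen r x y :=
  hl.backwards_induction (ReflTransGen r · y) l (fun _ _ h₁ h₂ => .head h₁ h₂)
    (fun hne => by rw [List.getLast?_eq_some_getLast hne, Option.some_inj] at hy; rw [hy]) x hx

namespace Set

variable {α β : Type*} {s : Set α} {t : Set β}

theorem ncard_le_ncard_of_forall_subsingleton (r : α → β → Prop)
    (hs : ∀ a ∈ s, ∃ b ∈ t, r a b) (ht : ∀ b ∈ t, {a ∈ s | r a b}.Subsingleton)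
    (htf : t.Finite) : s.ncard ≤ t.ncard := by
  rcases s.eq_empty_or_nonempty with rfl | ⟨a₀, ha₀⟩
  · simp
  have : Nonempty β := ⟨(hs a₀ ha₀).choose⟩
  choose! f hft hfr using hs
  exact ncard_le_ncard_of_injOn f hft
    (fun a ha a' ha' he => ht _ (hft a ha) ⟨ha, hfr a ha⟩ ⟨ha', he ▸ hfr a' ha'⟩) htf

theorem two_mul_ncard_le_ncard_offDiag (r : α → β × β → Prop)
    (hs : ∀ a ∈ s, ∃ q ∈ t.offDiag, r a q) (hswap : ∀ a ∈ s, ∀ q, r a q → r a q.swap)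
    (ht : ∀ q ∈ t.offDiag, {a ∈ s | r a q}.Subsingleton) (htf : t.Finite) :
    2 * s.ncard ≤ t.offDiag.ncard := by
  rcases s.eq_empty_or_nonempty with rfl | ⟨a₀, ha₀⟩
  · simp
  have : Nonempty β := ⟨(hs a₀ ha₀).choose.1⟩
  choose! f hft hfr using hs
  have hinj : InjOn f s :=
    fun a ha a' ha' he => ht _ (hft a ha) ⟨ha, hfr a ha⟩ ⟨ha', he ▸ hfr a' ha'⟩
  have hinj' : InjOn (Prod.swap ∘ f) s := Prod.swap_injective.comp_injOn hinj
  have hdisj : Disjoint (f '' s) ((Prod.swap ∘ f) '' s) := by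
    refine disjoint_left.mpr ?_
    rintro _ ⟨a, ha, rfl⟩ ⟨a', ha', he⟩
    have hq : r a' (f a) := by simpa [← he] using hswap a' ha' _ (hfr a' ha')
    obtain rfl := ht _ (hft a ha) ⟨ha, hfr a ha⟩ ⟨ha', hq⟩
    exact (mem_offDiag.mp (hft a ha)).2.2 (by simpa using (congrArg Prod.fst he).symm)
  have hsub : f '' s ∪ (Prod.swap ∘ f) '' s ⊆ t.offDiag := by
    rintro _ (⟨a, ha, rfl⟩ | ⟨a, ha, rfl⟩)
    · exact hft a ha
    · obtain ⟨h₁, h₂, hne⟩ := mem_offDiag.mp (hft a ha)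
      exact mem_offDiag.mpr ⟨h₂, h₁, Ne.symm hne⟩
  calc 2 * s.ncard = (f '' s ∪ (Prod.swap ∘ f) '' s).ncard := by
        rw [ncard_union_eq hdisj (htf.offDiag.subset (subset_union_left.trans hsub))
          (htf.offDiag.subset (subset_union_right.trans hsub)), hinj.ncard_image,
          hinj'.ncard_image, two_mul]
    _ ≤ t.offDiag.ncard := ncard_le_ncard hsub htf.offDiag

end Set

section Forest

variable {α : Type*} {R N : α → α → Prop} {S : Set α} {a b c c' r w : α}
  {e : α × α} {q : (α × α) × (α × α)}

def IsLCA (R : α → α → Prop) (c a b : α) : Prop :=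
  ReflTransGen R c a ∧ ReflTransGen R c b ∧
    ∀ w, ReflTransGen R w a → ReflTransGen R w b → ReflTransGen R w c

theorem IsLCA.symm (h : IsLCA R c a b) : IsLCA R c b a :=
  ⟨h.2.1, h.1, fun w hwb hwa => h.2.2 w hwa hwb⟩

theorem IsLCA.not_transGen (hR : ∀ a, ¬ TransGen R a a) (h : IsLCA R c a b)
    (hcw : TransGen R c w) (hwa : ReflTransGen R w a) (hwb : ReflTransGen R w b) : False :=
  hR c (hcw.trans_left (h.2.2 w hwa hwb))

def EntersBelow (R : α → α → Prop) (c : α) (e : α × α) (a : α) : Prop :=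
  TransGen R c e.2 ∧ ReflTransGen R e.2 a

def LeavesBelow (R : α → α → Prop) (c : α) (e : α × α) (a : α) : Prop :=
  ∃ w, TransGen R c w ∧ ReflTransGen R w a ∧ ReflTransGen R w e.1

def IsEntryPair (R : α → α → Prop) (c : α) (q : (α × α) × (α × α)) : Prop :=
  ∃ a b, IsLCA R c a b ∧ EntersBelow R c q.1 a ∧ EntersBelow R c q.2 b

def IsExitEntryPair (R : α → α → Prop) (c : α) (q : (α × α) × (α × α)) : Prop :=
  ∃ a b, IsLCA R c a b ∧ LeavesBelow R c q.1 a ∧ EntersBelow R c q.2 b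

def extraArcs (N R : α → α → Prop) : Set (α × α) := {e | N e.1 e.2 ∧ ¬ R e.1 e.2}

theorem IsEntryPair.swap (h : IsEntryPair R c q) : IsEntryPair R c q.swap :=
  let ⟨a, b, hl, h₁, h₂⟩ := h
  ⟨b, a, hl.symm, h₂, h₁⟩

theorem IsEntryPair.reflTransGen (h : IsEntryPair R c q) (h' : IsEntryPair R c' q) :
    ReflTransGen R c' c := by
  obtain ⟨a, b, hl, ⟨-, h₁a⟩, ⟨-, h₂b⟩⟩ := h
  obtain ⟨-, -, -, ⟨hc'₁, -⟩, ⟨hc'₂, -⟩⟩ := h'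
  exact hl.2.2 c' (hc'₁.to_reflTransGen.trans h₁a) (hc'₂.to_reflTransGen.trans h₂b)

theorem IsEntryPair.eq (hR : ∀ a, ¬ TransGen R a a) (h : IsEntryPair R c q)
    (h' : IsEntryPair R c' q) : c = c' :=
  (h'.reflTransGen h).antisymm_of_acyclic hR (h.reflTransGen h')

theorem IsExitEntryPair.reflTransGen (hU : Relator.LeftUnique R) (hR : ∀ a, ¬ TransGen R a a)
    (h : IsExitEntryPair R c q) (h' : IsExitEntryPair R c' q) : ReflTransGen R c' c := by
  obtain ⟨a, b, hl, ⟨w, hcw, hwa, hwe⟩, ⟨-, h₂b⟩⟩ := h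
  obtain ⟨-, -, -, ⟨w', hc'w', -, hw'e⟩, ⟨hc'₂, -⟩⟩ := h'
  have hc'b : ReflTransGen R c' b := hc'₂.to_reflTransGen.trans h₂b
  suffices ReflTransGen R c' a from hl.2.2 c' this hc'b
  rcases hwe.total_of_left_unique hU hw'e with hww' | hw'w
  · rcases hc'w'.to_reflTransGen.total_of_left_unique hU hww' with hc'w | hwc'
    · exact hc'w.trans hwa
    · exact (hl.not_transGen hR hcw hwa (hwc'.trans hc'b)).elim
  · exact hc'w'.to_reflTransGen.trans (hw'w.trans hwa)

theorem IsExitEntryPair.eq (hU : Relator.LeftUnique R) (hR : ∀ a, ¬ TransGen R a a)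
    (h : IsExitEntryPair R c q) (h' : IsExitEntryPair R c' q) : c = c' :=
  (h'.reflTransGen hU hR h).antisymm_of_acyclic hR (h.reflTransGen hU hR h')

theorem transGen_of_reflTransGen_of_notMem (hU : Relator.LeftUnique R) (hc : c ∉ S)
    (hca : ReflTransGen R c a) (hwa : ReflTransGen (fun x y => R x y ∧ y ∈ S) w a)
    (hw : w ∈ S) : TransGen R c w := by
  induction hwa using ReflTransGen.head_induction_on with
  | refl => exact hca.transGen_of_ne (ne_of_mem_of_not_mem hw hc).symm
  | @head w y hwy _ ih =>
    obtain ⟨m, hcm, hmy⟩ := TransGen.tail'_iff.mp (ih hwy.2)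
    obtain rfl := hU hmy hwy.1
    exact hcm.transGen_of_ne (ne_of_mem_of_not_mem hw hc).symm

theorem transGen_root_or_exists_entersBelow (hU : Relator.LeftUnique R) (hc : c ∉ S)
    (hca : ReflTransGen R c a) (hr : r ∈ S) (hra : ReflTransGen (induce N S) r a) :
    (TransGen R c r ∧ ReflTransGen R r a) ∨
      ∃ e : α × α, induce N S e.1 e.2 ∧ ¬ R e.1 e.2 ∧ ReflTransGen (induce N S) r e.1 ∧
        EntersBelow R c e a := by
  have toTree : ∀ {x y}, ReflTransGen (induce N S ⊓ R) x y →
      ReflTransGen (fun x y => R x y ∧ y ∈ S) x y :=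
    fun h => ReflTransGen.mono (fun _ _ h => ⟨h.2, h.1.2.2⟩) _ _ h
  rcases hra.inf_or_exists_last_not (q := R) with hra' | ⟨s, t, hst, hR, hrs, hta⟩
  · exact Or.inl ⟨transGen_of_reflTransGen_of_notMem hU hc hca (toTree hra') hr,
      ReflTransGen.mono (fun _ _ h => h.2) _ _ hra'⟩
  · exact Or.inr ⟨(s, t), hst, hR, hrs,
      transGen_of_reflTransGen_of_notMem hU hc hca (toTree hta) hst.2.2,
      ReflTransGen.mono (fun _ _ h => h.2) _ _ hta⟩

theorem exists_exitEntryPair (hl : IsLCA R c a b) (hcr : TransGen R c r)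
    (hra : ReflTransGen R r a) (he : induce N S e.1 e.2) (heR : ¬ R e.1 e.2)
    (hre : ReflTransGen (induce N S) r e.1) (heb : EntersBelow R c e b) :
    ∃ q ∈ extraArcs N R ×ˢ extraArcs N R, IsExitEntryPair R c q := by
  obtain ⟨s, t, hst, hR, hrs⟩ := hre.exists_first_not he heR
  exact ⟨((s, t), e), ⟨⟨hst.1, hR⟩, ⟨he.1, heR⟩⟩, a, b, hl,
    ⟨r, hcr, hra, ReflTransGen.mono (fun _ _ h => h.2) _ _ hrs⟩, heb⟩

theorem exists_exitEntryPair_or_entryPair (hU : Relator.LeftUnique R)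
    (hR : ∀ a, ¬ TransGen R a a) (hS : RootedOn N S) (hc : c ∉ S) (ha : a ∈ S) (hb : b ∈ S)
    (hl : IsLCA R c a b) :
    (∃ q ∈ extraArcs N R ×ˢ extraArcs N R, IsExitEntryPair R c q) ∨
      ∃ q ∈ (extraArcs N R).offDiag, IsEntryPair R c q := by
  obtain ⟨r, hr, hreach⟩ := hS ⟨a, ha⟩
  rcases transGen_root_or_exists_entersBelow hU hc hl.1 hr (hreach a ha) with
    ⟨hcr, hra⟩ | ⟨e₁, he₁, he₁R, hre₁, he₁a⟩ <;>
  rcases transGen_root_or_exists_entersBelow hU hc hl.2.1 hr (hreach b hb) with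
    ⟨hcr', hrb⟩ | ⟨e₂, he₂, he₂R, hre₂, he₂b⟩
  · exact (hl.not_transGen hR hcr hra hrb).elim
  · exact Or.inl (exists_exitEntryPair hl hcr hra he₂ he₂R hre₂ he₂b)
  · exact Or.inl (exists_exitEntryPair hl.symm hcr' hrb he₁ he₁R hre₁ he₁a)
  · refine Or.inr ⟨(e₁, e₂), ⟨⟨he₁.1, he₁R⟩, ⟨he₂.1, he₂R⟩, ?_⟩, a, b, hl, he₁a, he₂b⟩
    intro (he : e₁ = e₂)
    subst he
    exact hl.not_transGen hR he₁a.1 he₁a.2 he₂b.2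

theorem two_mul_ncard_le_three_mul_sq [Finite α] (hU : Relator.LeftUnique R)
    (hR : ∀ a, ¬ TransGen R a a) {C : Set α}
    (hC : ∀ c ∈ C, (∃ q ∈ extraArcs N R ×ˢ extraArcs N R, IsExitEntryPair R c q) ∨
      ∃ q ∈ (extraArcs N R).offDiag, IsEntryPair R c q) :
    2 * C.ncard ≤ 3 * (extraArcs N R).ncard ^ 2 := by
  set E := extraArcs N R
  have hX : {c | ∃ q ∈ E ×ˢ E, IsExitEntryPair R c q}.ncard ≤ (E ×ˢ E).ncard :=
    Set.ncard_le_ncard_of_forall_subsingleton _ (fun _ h => h)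
      (fun _ _ _ ⟨_, h⟩ _ ⟨_, h'⟩ => h.eq hU hR h') (Set.toFinite _)
  have hY : 2 * {c | ∃ q ∈ E.offDiag, IsEntryPair R c q}.ncard ≤ E.offDiag.ncard :=
    Set.two_mul_ncard_le_ncard_offDiag _ (fun _ h => h) (fun _ _ _ h => h.swap)
      (fun _ _ _ ⟨_, h⟩ _ ⟨_, h'⟩ => h.eq hR h') (Set.toFinite _)
  have hYX : E.offDiag.ncard ≤ (E ×ˢ E).ncard := Set.ncard_le_ncard (Set.offDiag_subset_prod E)
  have hC' : C.ncard ≤ {c | ∃ q ∈ E ×ˢ E, IsExitEntryPair R c q}.ncard +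
      {c | ∃ q ∈ E.offDiag, IsEntryPair R c q}.ncard :=
    (Set.ncard_le_ncard hC).trans (Set.ncard_union_le _ _)
  rw [Set.ncard_prod] at hX hYX
  rw [sq]
  linarith

end Forest

section Subdivision

variable {V W : Type*} {T : V → V → Prop} {T' : W → W → Prop} {φ : V → W}
  {p : V → V → List W} {a b c d d' : V} {w w' s t x : W} {i : ℕ}

/- `p a b` is the path of `T'` subdividing the arc `a → b` of `T`; its interior vertices are
`(p a b).tail.dropLast`. -/
structure IsSubdivision (T : V → V → Prop) (T' : W → W → Prop) (φ : V → W)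
    (p : V → V → List W) : Prop where
  injective : Function.Injective φ
  isDirPath : ∀ a b, T a b → IsDirPath T' (φ a) (φ b) (p a b)
  arc_iff : ∀ x y : W, T' x y ↔ ∃ a b : V, T a b ∧
      ∃ i : ℕ, (p a b)[i]? = some x ∧ (p a b)[i + 1]? = some y
  interior_notMem_range : ∀ a b, T a b → ∀ x ∈ (p a b).tail.dropLast, x ∉ Set.range φ
  interior_disjoint : ∀ a b a' b', T a b → T a' b' → (a, b) ≠ (a', b') →
      ∀ x ∈ (p a b).tail.dropLast, x ∉ (p a' b').tail.dropLast

/- Collapsing every subdivided arc onto its head projects `W` back onto `V`. -/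
def ProjectsTo (T : V → V → Prop) (φ : V → W) (p : V → V → List W) (w : W) (d : V) : Prop :=
  w = φ d ∨ ∃ c, T c d ∧ w ∈ (p c d).tail.dropLast

namespace IsSubdivision

variable (H : IsSubdivision T T' φ p)
include H

theorem eq_or_mem_interior_of_getElem? (hab : T a b) (h : (p a b)[i]? = some x)
    (hi : i + 1 < (p a b).length) : x = φ a ∨ x ∈ (p a b).tail.dropLast := by
  rcases Nat.eq_zero_or_pos i with rfl | h0
  · have hhead := (H.isDirPath a b hab).2.1
    rw [List.head?_eq_getElem?, h, Option.some_inj] at hhead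
    exact Or.inl hhead
  · exact Or.inr (List.mem_tail_dropLast_of_getElem? h h0 hi)

theorem eq_or_mem_interior_of_getElem?_succ (hab : T a b) (h : (p a b)[i + 1]? = some x) :
    x = φ b ∨ x ∈ (p a b).tail.dropLast := by
  have hlt := (List.getElem?_eq_some_iff.mp h).1
  rcases Nat.lt_or_ge (i + 2) (p a b).length with hi | hi
  · exact Or.inr (List.mem_tail_dropLast_of_getElem? h (Nat.succ_pos i) hi)
  · have hlast := (H.isDirPath a b hab).2.2.1
    rw [List.getLast?_eq_getElem?, show (p a b).length - 1 = i + 1 by omega, h,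
      Option.some_inj] at hlast
    exact Or.inl hlast

theorem eq_of_mem_interior {a' b' : V} (hab : T a b) (ha'b' : T a' b')
    (h : x ∈ (p a b).tail.dropLast) (h' : x ∈ (p a' b').tail.dropLast) : (a, b) = (a', b') :=
  by_contra fun hne => H.interior_disjoint a b a' b' hab ha'b' hne x h h'

theorem reflTransGen_of_mem (hab : T a b) (hx : x ∈ p a b) : ReflTransGen T' x (φ b) :=
  let ⟨_, _, hlast, hchain, _⟩ := H.isDirPath a b hab
  List.reflTransGen_of_mem_of_getLast? hchain hx hlast

theorem reflTransGen_map (h : ReflTransGen T a b) : ReflTransGen T' (φ a) (φ b) := by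
  induction h with
  | refl => exact .refl
  | @tail b c _ hbc ih =>
    exact ih.trans (H.reflTransGen_of_mem hbc (List.mem_of_mem_head? (H.isDirPath b c hbc).2.1))

theorem leftUnique (hT : Relator.LeftUnique T) : Relator.LeftUnique T' := by
  intro s s' t h h'
  obtain ⟨a, b, hab, i, hs, ht⟩ := (H.arc_iff s t).mp h
  obtain ⟨a', b', ha'b', j, hs', ht'⟩ := (H.arc_iff s' t).mp h'
  have hpath : (a, b) = (a', b') := by
    rcases H.eq_or_mem_interior_of_getElem?_succ hab ht with rfl | hint <;>
    rcases H.eq_or_mem_interior_of_getElem?_succ ha'b' ht' with heq | hint'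
    · obtain rfl := H.injective heq
      rw [hT hab ha'b']
    · exact (H.interior_notMem_range a' b' ha'b' _ hint' ⟨b, rfl⟩).elim
    · exact (H.interior_notMem_range a b hab _ hint ⟨b', heq.symm⟩).elim
    · exact H.eq_of_mem_interior hab ha'b' hint hint'
  obtain ⟨rfl, rfl⟩ := Prod.ext_iff.mp hpath
  have hij : i + 1 = j + 1 := (List.getElem?_inj (List.getElem?_eq_some_iff.mp ht).1
    (H.isDirPath a b hab).2.2.2.2).mp (ht.trans ht'.symm)
  obtain rfl : i = j := by omega
  exact Option.some_inj.mp (hs.symm.trans hs')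

theorem projectsTo_unique (hd : ProjectsTo T φ p w d) (hd' : ProjectsTo T φ p w d') :
    d = d' := by
  rcases hd with rfl | ⟨c, hcd, hw⟩ <;> rcases hd' with heq | ⟨c', hc'd', hw'⟩
  · exact H.injective heq
  · exact (H.interior_notMem_range c' d' hc'd' _ hw' ⟨d, rfl⟩).elim
  · exact (H.interior_notMem_range c d hcd _ hw ⟨d', heq.symm⟩).elim
  · exact (Prod.ext_iff.mp (H.eq_of_mem_interior hcd hc'd' hw hw')).2

theorem reflTransGen_of_projectsTo (hd : ProjectsTo T φ p w d) : ReflTransGen T' w (φ d) := by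
  rcases hd with rfl | ⟨c, hcd, hw⟩
  · exact .refl
  · exact H.reflTransGen_of_mem hcd (List.mem_of_mem_tail (List.mem_of_mem_dropLast hw))

theorem exists_projectsTo_of_arc (h : T' s t) :
    ∃ d d', ProjectsTo T φ p s d ∧ ProjectsTo T φ p t d' ∧ ReflTransGen T d d' := by
  obtain ⟨a, b, hab, i, hs, ht⟩ := (H.arc_iff s t).mp h
  have hb : ProjectsTo T φ p t b :=
    (H.eq_or_mem_interior_of_getElem?_succ hab ht).imp id fun h => ⟨a, hab, h⟩
  rcases H.eq_or_mem_interior_of_getElem? hab hs (List.getElem?_eq_some_iff.mp ht).1 with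
    rfl | hs'
  · exact ⟨a, b, Or.inl rfl, hb, .single hab⟩
  · exact ⟨b, b, Or.inr ⟨a, hab, hs'⟩, hb, .refl⟩

theorem exists_projectsTo (h : ReflTransGen T' w (φ a)) : ∃ d, ProjectsTo T φ p w d := by
  rcases h.cases_head with hw | ⟨y, hwy, -⟩
  · exact ⟨a, Or.inl hw⟩
  · obtain ⟨d, -, hd, -, -⟩ := H.exists_projectsTo_of_arc hwy
    exact ⟨d, hd⟩

theorem reflTransGen_of_projectsTo_of_reflTransGen (h : ReflTransGen T' w w')
    (hd : ProjectsTo T φ p w d) (hd' : ProjectsTo T φ p w' d') : ReflTransGen T d d' := by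
  induction h generalizing d' with
  | refl => exact H.projectsTo_unique hd hd' ▸ .refl
  | tail _ hmw' ih =>
    obtain ⟨d₁, d₂, hm, hd₂, hd₁₂⟩ := H.exists_projectsTo_of_arc hmw'
    exact H.projectsTo_unique hd₂ hd' ▸ (ih hm).trans hd₁₂

theorem isLCA_map (h : IsLCA T c a b) : IsLCA T' (φ c) (φ a) (φ b) := by
  refine ⟨H.reflTransGen_map h.1, H.reflTransGen_map h.2.1, fun w hwa hwb => ?_⟩
  obtain ⟨d, hd⟩ := H.exists_projectsTo hwa
  have hda := H.reflTransGen_of_projectsTo_of_reflTransGen hwa hd (Or.inl rfl)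
  have hdb := H.reflTransGen_of_projectsTo_of_reflTransGen hwb hd (Or.inl rfl)
  exact (H.reflTransGen_of_projectsTo hd).trans (H.reflTransGen_map (h.2.2 d hda hdb))

end IsSubdivision

end Subdivision

theorem stmt14_general {V W 𝒢 : Type*} [Fintype W] [Fintype 𝒢]
    (T : V → V → Prop)
    (hparent : ∀ a b c : V, T a c → T b c → a = b)
    (lca : V → V → V)
    (hlca : ∀ a b : V, Relation.ReflTransGen T (lca a b) a ∧
        Relation.ReflTransGen T (lca a b) b ∧
        ∀ c : V, Relation.ReflTransGen T c a → Relation.ReflTransGen T c b →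
          Relation.ReflTransGen T c (lca a b))
    (Gm : V → Set 𝒢) (k h : ℕ)
    -- `N` is a rooted acyclic digraph:
    (N : W → W → Prop)
    (hNacyc : ∀ a : W, ¬ Relation.TransGen N a a)
    -- `T'` is a subdivision of `T` contained in `N`:
    (T' : W → W → Prop) (φ : V → W) (p : V → V → List W)
    (hφ : Function.Injective φ)
    (hpath : ∀ a b : V, T a b → IsDirPath T' (φ a) (φ b) (p a b))
    (harcs : ∀ x y : W, T' x y ↔ ∃ a b : V, T a b ∧
        ∃ i : ℕ, (p a b)[i]? = some x ∧ (p a b)[i + 1]? = some y)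
    (hint₁ : ∀ a b : V, T a b → ∀ x ∈ (p a b).tail.dropLast, x ∉ Set.range φ)
    (hint₂ : ∀ a b a' b' : V, T a b → T a' b' → (a, b) ≠ (a', b') →
        ∀ x ∈ (p a b).tail.dropLast, x ∉ (p a' b').tail.dropLast)
    (hsub : ∀ x y : W, T' x y → N x y)
    -- exactly `h` arcs of `N` are not arcs of `T'`:
    (hcount : ({q : W × W | N q.1 q.2 ∧ ¬ T' q.1 q.2}).ncard = h)
    -- `N` admits a `(G,k)`-gene labelling:
    (F : W → Set 𝒢)
    (hF₁ : ∀ x : V, IsSink T x → F (φ x) = Gm x)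
    (hF₂ : ∀ w : W, (F w).ncard ≤ k)
    (hF₃ : ∀ g : 𝒢, RootedOn N {w | g ∈ F w}) :
    Real.sqrt ((2 / 3) *
        (({v : V | ({g : 𝒢 | ∃ x₁ x₂ : V, IsSink T x₁ ∧ IsSink T x₂ ∧
            g ∈ Gm x₁ ∧ g ∈ Gm x₂ ∧ lca x₁ x₂ = v}).ncard > k}).ncard : ℝ)) ≤
      (h : ℝ) := by
  have H : IsSubdivision T T' φ p := ⟨hφ, hpath, harcs, hint₁, hint₂⟩
  have hU : Relator.LeftUnique T' := H.leftUnique fun a b c => hparent a b c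
  have hacyc : ∀ w, ¬ TransGen T' w w := fun w hw => hNacyc w (TransGen.mono hsub _ _ hw)
  set Bad := {v : V | ({g : 𝒢 | ∃ x₁ x₂ : V, IsSink T x₁ ∧ IsSink T x₂ ∧
    g ∈ Gm x₁ ∧ g ∈ Gm x₂ ∧ lca x₁ x₂ = v}).ncard > k}
  have hBad : ∀ c ∈ φ '' Bad,
      (∃ q ∈ extraArcs N T' ×ˢ extraArcs N T', IsExitEntryPair T' c q) ∨
        ∃ q ∈ (extraArcs N T').offDiag, IsEntryPair T' c q := by
    rintro _ ⟨v, hv, rfl⟩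
    obtain ⟨g, ⟨x, x', hx, hx', hgx, hgx', rfl⟩, hg⟩ :=
      Set.exists_mem_notMem_of_ncard_lt_ncard ((hF₂ (φ v)).trans_lt hv)
    exact exists_exitEntryPair_or_entryPair hU hacyc (hF₃ g) hg
      (show g ∈ F (φ x) from (hF₁ x hx).symm ▸ hgx)
      (show g ∈ F (φ x') from (hF₁ x' hx').symm ▸ hgx')
      (H.isLCA_map (hlca x x'))
  have hcard := two_mul_ncard_le_three_mul_sq hU hacyc hBad
  rw [Set.ncard_image_of_injective _ hφ, show (extraArcs N T').ncard = h from hcount] at hcard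
  rw [Real.sqrt_le_left (Nat.cast_nonneg h)]
  have hcard' : (2 * Bad.ncard : ℝ) ≤ 3 * h ^ 2 := by exact_mod_cast hcard
  linarith

/-- Theorem 1(i): let `T` be a rooted tree with genome assignment `Gm` on its leaves and
let `n v` count the genes shared by two leaves whose lca is `v`. If a rooted acyclic
digraph `N` contains a subdivision `T'` of `T` (with vertex embedding `φ` and arc-paths
`p`), exactly `h` arcs of `N` are not arcs of `T'`, and `N` admits a `(G,k)`-gene
labelling, then `h ≥ √((2/3)·|{v : n v > k}|)`. -/
theorem stmt14 {V W 𝒢 : Type*} [Fintype V] [Fintype W] [Fintype 𝒢]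
    (T : V → V → Prop) (ρ : V)
    (hρ : ∀ v : V, Relation.ReflTransGen T ρ v)
    (hparent : ∀ a b c : V, T a c → T b c → a = b)
    (hacycT : ∀ a : V, ¬ Relation.TransGen T a a)
    (lca : V → V → V)
    (hlca : ∀ a b : V, Relation.ReflTransGen T (lca a b) a ∧
        Relation.ReflTransGen T (lca a b) b ∧
        ∀ c : V, Relation.ReflTransGen T c a → Relation.ReflTransGen T c b →
          Relation.ReflTransGen T c (lca a b))
    (Gm : V → Set 𝒢) (k h : ℕ) (hk : 0 < k)
    -- `N` is a rooted acyclic digraph: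
    (N : W → W → Prop)
    (hNroot : ∃ ρ' : W, ∀ w : W, Relation.ReflTransGen N ρ' w)
    (hNacyc : ∀ a : W, ¬ Relation.TransGen N a a)
    -- `T'` is a subdivision of `T` contained in `N`:
    (T' : W → W → Prop) (φ : V → W) (p : V → V → List W)
    (hφ : Function.Injective φ)
    (hpath : ∀ a b : V, T a b → IsDirPath T' (φ a) (φ b) (p a b))
    (harcs : ∀ x y : W, T' x y ↔ ∃ a b : V, T a b ∧
        ∃ i : ℕ, (p a b)[i]? = some x ∧ (p a b)[i + 1]? = some y)
    (hint₁ : ∀ a b : V, T a b → ∀ x ∈ (p a b).tail.dropLast, x ∉ Set.range φ)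
    (hint₂ : ∀ a b a' b' : V, T a b → T a' b' → (a, b) ≠ (a', b') →
        ∀ x ∈ (p a b).tail.dropLast, x ∉ (p a' b').tail.dropLast)
    (hsub : ∀ x y : W, T' x y → N x y)
    -- exactly `h` arcs of `N` are not arcs of `T'`:
    (hcount : ({q : W × W | N q.1 q.2 ∧ ¬ T' q.1 q.2}).ncard = h)
    -- `N` admits a `(G,k)`-gene labelling:
    (F : W → Set 𝒢)
    (hF₁ : ∀ x : V, IsSink T x → F (φ x) = Gm x)
    (hF₂ : ∀ w : W, (F w).ncard ≤ k)
    (hF₃ : ∀ g : 𝒢, RootedOn N {w | g ∈ F w}) :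
    Real.sqrt ((2 / 3) *
        (({v : V | ({g : 𝒢 | ∃ x₁ x₂ : V, IsSink T x₁ ∧ IsSink T x₂ ∧
            g ∈ Gm x₁ ∧ g ∈ Gm x₂ ∧ lca x₁ x₂ = v}).ncard > k}).ncard : ℝ)) ≤
      (h : ℝ) :=
  stmt14_general T hparent lca hlca Gm k h N hNacyc T' φ p hφ hpath harcs hint₁ hint₂ hsub hcount F
    hF₁ hF₂ hF₃
end
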